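/- arXiv:1907.09911 — 11 statements merged into one kernel-verified Lean document; each statement's English description precedes it below -/
import Mathlib

section
/- Let G be a finite simple graph such that every subgraph of G with at least one vertex has a vertex of degree at most 5, and every bipartite subgraph of G on m ≥ 3 vertices has at most 2m − 4 edges (every planar graph satisfies both conditions). Then G admits an equitable 3-partition (V_1, V_2, V_3) of its vertex set such that each induced subgraph G[V_i] is 2-degenerate. -/
open SimpleGraph

/-- The set `S` induces a `d`-degenerate subgraph of `G`: every nonempty subset `T` of `S`
contains a vertex with at most `d` neighbors inside `T`. -/
def DegenerateOn {V : Type*} (G : SimpleGraph V) (d : ℕ) (S : Set V) : Prop :=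
  ∀ T ⊆ S, T.Nonempty → ∃ v ∈ T, (G.neighborSet v ∩ T).ncard ≤ d

set_option linter.unusedSectionVars false

section Aux
variable {V : Type*} [Fintype V] [DecidableEq V] {G : SimpleGraph V}

lemma degOn_mono {S T : Set V} (hTS : T ⊆ S) (h : DegenerateOn G 2 S) :
    DegenerateOn G 2 T := fun U hU hne => h U (hU.trans hTS) hne

lemma degOn_empty : DegenerateOn G 2 (↑(∅ : Finset V)) := by
  intro T hT hne
  obtain ⟨x, hx⟩ := hne
  simpa using hT hx

lemma degOn_insert [DecidableRel G.Adj] {X : Finset V} {v : V}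
    (h : DegenerateOn G 2 ↑X) (hv : (X.filter (fun w => G.Adj v w)).card ≤ 2) :
    DegenerateOn G 2 ↑(insert v X) := by
  intro T hT hne
  by_cases hvT : v ∈ T
  · refine ⟨v, hvT, ?_⟩
    have hsub : G.neighborSet v ∩ T ⊆ ↑(X.filter (fun w => G.Adj v w)) := by
      rintro x ⟨hadj, hxT⟩
      have hx : x ∈ insert v X := Finset.mem_coe.mp (hT hxT)
      have hadj' : G.Adj v x := hadj
      rcases Finset.mem_insert.mp hx with rfl | hxX
      · exact absurd hadj' (G.irrefl)
      · simp only [Finset.coe_filter, Set.mem_setOf_eq]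
        exact ⟨hxX, hadj'⟩
    calc (G.neighborSet v ∩ T).ncard
        ≤ (↑(X.filter fun w => G.Adj v w) : Set V).ncard :=
          Set.ncard_le_ncard hsub (Set.toFinite _)
      _ = (X.filter fun w => G.Adj v w).card := Set.ncard_coe_finset _
      _ ≤ 2 := hv
  · refine h T ?_ hne
    intro x hxT
    rcases Finset.mem_insert.mp (Finset.mem_coe.mp (hT hxT)) with rfl | hxX
    · exact absurd hxT hvT
    · exact hxX

/-- The bipartite subgraph of `G` consisting of all edges between `X` and `Y`. -/
def bipSub (G : SimpleGraph V) (X Y : Set V) : G.Subgraph where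
  verts := X ∪ Y
  Adj u w := G.Adj u w ∧ ((u ∈ X ∧ w ∈ Y) ∨ (u ∈ Y ∧ w ∈ X))
  adj_sub h := h.1
  edge_vert h := by rcases h.2 with ⟨h1, _⟩ | ⟨h1, _⟩
                    · exact Or.inl h1
                    · exact Or.inr h1
  symm := ⟨fun u w h => ⟨h.1.symm, by tauto⟩⟩

lemma no_dense (G : SimpleGraph V) [DecidableRel G.Adj]
    (hbip : ∀ H : G.Subgraph, ∀ X Y : Set V, X ∪ Y = H.verts → Disjoint X Y →
      (∀ u v, H.Adj u v → (u ∈ X ∧ v ∈ Y) ∨ (u ∈ Y ∧ v ∈ X)) →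
      3 ≤ H.verts.ncard → H.edgeSet.ncard ≤ 2 * H.verts.ncard - 4)
    {X Y : Finset V} (hXY : Disjoint X Y)
    (h3 : ∀ x ∈ X, 3 ≤ (Y.filter (fun w => G.Adj x w)).card) :
    3 * X.card ≤ 2 * (X.card + Y.card) - 4 := by
  rcases X.eq_empty_or_nonempty with rfl | ⟨x0, hx0⟩
  · simp
  set H := bipSub G ↑X ↑Y with hH
  have hverts : H.verts = ↑(X ∪ Y) := by simp [hH, bipSub]
  have hvcard : H.verts.ncard = X.card + Y.card := by
    rw [hverts, Set.ncard_coe_finset, Finset.card_union_of_disjoint hXY]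
  have hY3 : 3 ≤ Y.card := le_trans (h3 x0 hx0) (Finset.card_le_card (Finset.filter_subset _ _))
  -- lower bound on edges
  set P : Finset ((_ : V) × V) := X.sigma (fun x => Y.filter (fun w => G.Adj x w)) with hP
  have hPcard : 3 * X.card ≤ P.card := by
    rw [hP, Finset.card_sigma]
    calc 3 * X.card = ∑ _x ∈ X, 3 := by rw [Finset.sum_const, smul_eq_mul, mul_comm]
      _ ≤ ∑ x ∈ X, (Y.filter (fun w => G.Adj x w)).card := Finset.sum_le_sum h3
  have hinj : Set.InjOn (fun p : (_ : V) × V => s(p.1, p.2)) ↑P := by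
    rintro ⟨a, b⟩ hp ⟨c, d⟩ hq hpq
    rw [Finset.mem_coe, hP, Finset.mem_sigma, Finset.mem_filter] at hp hq
    simp only [Sym2.eq_iff] at hpq
    rcases hpq with ⟨rfl, rfl⟩ | ⟨h1, h2⟩
    · rfl
    · subst h1; subst h2
      exact absurd hq.1 (Finset.disjoint_right.mp hXY hp.2.1)
  have hsub : ↑(P.image (fun p : (_ : V) × V => s(p.1, p.2))) ⊆ H.edgeSet := by
    intro e he
    simp only [Finset.coe_image, Set.mem_image, Finset.mem_coe] at he
    obtain ⟨⟨a, b⟩, hab, rfl⟩ := he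
    rw [Finset.mem_sigma, Finset.mem_filter] at hab
    rw [Subgraph.mem_edgeSet]
    exact ⟨hab.2.2, Or.inl ⟨by exact_mod_cast hab.1, by exact_mod_cast hab.2.1⟩⟩
  have hecard : 3 * X.card ≤ H.edgeSet.ncard := by
    calc 3 * X.card ≤ P.card := hPcard
      _ = (P.image (fun p : (_ : V) × V => s(p.1, p.2))).card :=
          (Finset.card_image_of_injOn hinj).symm
      _ = (↑(P.image (fun p : (_ : V) × V => s(p.1, p.2))) : Set (Sym2 V)).ncard :=
          (Set.ncard_coe_finset _).symm
      _ ≤ H.edgeSet.ncard := Set.ncard_le_ncard hsub (Set.toFinite _)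
  have hup := hbip H ↑X ↑Y (by rw [hverts]; simp) (by exact_mod_cast hXY)
    (fun u v h => h.2) (by omega)
  omega

lemma step (G : SimpleGraph V) [DecidableRel G.Adj]
    (hbip : ∀ H : G.Subgraph, ∀ X Y : Set V, X ∪ Y = H.verts → Disjoint X Y →
      (∀ u v, H.Adj u v → (u ∈ X ∧ v ∈ Y) ∨ (u ∈ Y ∧ v ∈ X)) →
      3 ≤ H.verts.ncard → H.edgeSet.ncard ≤ 2 * H.verts.ncard - 4)
    {S : Finset V} {v : V} (hvS : v ∈ S)
    (hvdeg : (S.filter (fun w => G.Adj v w)).card ≤ 5)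
    {A B C : Finset V}
    (hdAB : Disjoint A B) (hdAC : Disjoint A C) (hdBC : Disjoint B C)
    (hU : A ∪ B ∪ C = S.erase v)
    (hab : |(A.card : ℤ) - B.card| ≤ 1) (hac : |(A.card : ℤ) - C.card| ≤ 1)
    (hbc : |(B.card : ℤ) - C.card| ≤ 1)
    (hA : DegenerateOn G 2 ↑A) (hB : DegenerateOn G 2 ↑B) (hC : DegenerateOn G 2 ↑C)
    (hminA : C.card ≤ A.card) (hminB : C.card ≤ B.card) :
    ∃ V₁ V₂ V₃ : Finset V,
      Disjoint V₁ V₂ ∧ Disjoint V₁ V₃ ∧ Disjoint V₂ V₃ ∧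
      V₁ ∪ V₂ ∪ V₃ = S ∧
      |(V₁.card : ℤ) - V₂.card| ≤ 1 ∧ |(V₁.card : ℤ) - V₃.card| ≤ 1 ∧
      |(V₂.card : ℤ) - V₃.card| ≤ 1 ∧
      DegenerateOn G 2 ↑V₁ ∧ DegenerateOn G 2 ↑V₂ ∧ DegenerateOn G 2 ↑V₃ := by
  rw [abs_le] at hab hac hbc
  have hvnot : v ∉ A ∪ B ∪ C := by rw [hU]; exact Finset.notMem_erase v S
  simp only [Finset.mem_union, not_or] at hvnot
  obtain ⟨⟨hvA, hvB⟩, hvC⟩ := hvnot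
  -- the number of neighbours of v in each of the parts sums to at most 5
  have hsum : (A.filter (fun w => G.Adj v w)).card + (B.filter (fun w => G.Adj v w)).card +
      (C.filter (fun w => G.Adj v w)).card ≤ 5 := by
    have h1 : (A.filter (fun w => G.Adj v w)) ∪ (B.filter (fun w => G.Adj v w)) ∪
        (C.filter (fun w => G.Adj v w)) = (S.erase v).filter (fun w => G.Adj v w) := by
      rw [← Finset.filter_union, ← Finset.filter_union, hU]
    have hd1 : Disjoint (A.filter (fun w => G.Adj v w)) (B.filter (fun w => G.Adj v w)) :=
      hdAB.mono (Finset.filter_subset _ _) (Finset.filter_subset _ _)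
    have hd2 : Disjoint (A.filter (fun w => G.Adj v w) ∪ B.filter (fun w => G.Adj v w))
        (C.filter (fun w => G.Adj v w)) :=
      Finset.disjoint_union_left.mpr
        ⟨hdAC.mono (Finset.filter_subset _ _) (Finset.filter_subset _ _),
         hdBC.mono (Finset.filter_subset _ _) (Finset.filter_subset _ _)⟩
    have hcards := Finset.card_union_of_disjoint hd2
    rw [h1, Finset.card_union_of_disjoint hd1] at hcards
    have hle : ((S.erase v).filter (fun w => G.Adj v w)).card ≤
        (S.filter (fun w => G.Adj v w)).card :=
      Finset.card_le_card (Finset.filter_subset_filter _ (Finset.erase_subset _ _))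
    omega
  by_cases h1 : (C.filter (fun w => G.Adj v w)).card ≤ 2
  · -- insert v into C
    have hcC : (insert v C).card = C.card + 1 := Finset.card_insert_of_notMem hvC
    refine ⟨A, B, insert v C, hdAB, ?_, ?_, ?_, ?_, ?_, ?_, hA, hB, degOn_insert hC h1⟩
    · exact Finset.disjoint_insert_right.mpr ⟨hvA, hdAC⟩
    · exact Finset.disjoint_insert_right.mpr ⟨hvB, hdBC⟩
    · rw [Finset.union_insert, hU, Finset.insert_erase hvS]
    · rw [abs_le]; omega
    · rw [abs_le]; omega
    · rw [abs_le]; omega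
  have hfA : (A.filter (fun w => G.Adj v w)).card ≤ 2 := by omega
  have hfB : (B.filter (fun w => G.Adj v w)).card ≤ 2 := by omega
  by_cases h2 : A.card ≤ C.card
  · -- insert v into A
    have hcA : (insert v A).card = A.card + 1 := Finset.card_insert_of_notMem hvA
    refine ⟨insert v A, B, C, ?_, ?_, hdBC, ?_, ?_, ?_, ?_, degOn_insert hA hfA, hB, hC⟩
    · exact Finset.disjoint_insert_left.mpr ⟨hvB, hdAB⟩
    · exact Finset.disjoint_insert_left.mpr ⟨hvC, hdAC⟩
    · rw [Finset.insert_union, Finset.insert_union, hU, Finset.insert_erase hvS]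
    · rw [abs_le]; omega
    · rw [abs_le]; omega
    · rw [abs_le]; omega
  by_cases h3 : B.card ≤ C.card
  · -- insert v into B
    have hcB : (insert v B).card = B.card + 1 := Finset.card_insert_of_notMem hvB
    refine ⟨A, insert v B, C, ?_, hdAC, ?_, ?_, ?_, ?_, ?_, hA, degOn_insert hB hfB, hC⟩
    · exact Finset.disjoint_insert_right.mpr ⟨hvA, hdAB⟩
    · exact Finset.disjoint_insert_left.mpr ⟨hvC, hdBC⟩
    · rw [Finset.union_insert, Finset.insert_union, hU, Finset.insert_erase hvS]
    · rw [abs_le]; omega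
    · rw [abs_le]; omega
    · rw [abs_le]; omega
  -- now A.card = B.card = C.card + 1 and v has ≥ 3 neighbours in C: swap argument
  have hAc : A.card = C.card + 1 := by omega
  have hBc : B.card = C.card + 1 := by omega
  have hw : ∃ w ∈ A ∪ B, (C.filter (fun z => G.Adj w z)).card ≤ 2 := by
    by_contra hcon
    push_neg at hcon
    have hX3 : ∀ x ∈ insert v (A ∪ B), 3 ≤ (C.filter (fun z => G.Adj x z)).card := by
      intro x hx
      rcases Finset.mem_insert.mp hx with rfl | hx'
      · omega
      · exact hcon x hx'
    have hdisj : Disjoint (insert v (A ∪ B)) C :=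
      Finset.disjoint_insert_left.mpr ⟨hvC, Finset.disjoint_union_left.mpr ⟨hdAC, hdBC⟩⟩
    have hnd := no_dense G hbip hdisj hX3
    have hcardX : (insert v (A ∪ B)).card = A.card + B.card + 1 := by
      rw [Finset.card_insert_of_notMem (by simp [hvA, hvB]),
        Finset.card_union_of_disjoint hdAB]
    omega
  obtain ⟨w, hwAB, hwC2⟩ := hw
  have hSmem : ∀ x, x ∈ S ↔ x = v ∨ (x ∈ A ∨ x ∈ B) ∨ x ∈ C := by
    intro x
    conv_lhs => rw [← Finset.insert_erase hvS]
    rw [Finset.mem_insert, ← hU]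
    simp [Finset.mem_union]; tauto
  rcases Finset.mem_union.mp hwAB with hwA | hwB
  · -- w ∈ A : move w to C, put v in A's place
    have hwC : w ∉ C := Finset.disjoint_left.mp hdAC hwA
    have hwB : w ∉ B := Finset.disjoint_left.mp hdAB hwA
    have hvw : v ≠ w := fun h => hvA (h ▸ hwA)
    have hc1 : (insert v (A.erase w)).card = C.card + 1 := by
      rw [Finset.card_insert_of_notMem (fun h => hvA (Finset.erase_subset _ _ h)),
        Finset.card_erase_of_mem hwA]
      omega
    have hc3 : (insert w C).card = C.card + 1 := Finset.card_insert_of_notMem hwC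
    refine ⟨insert v (A.erase w), B, insert w C, ?_, ?_, ?_, ?_, ?_, ?_, ?_, ?_, hB, ?_⟩
    · exact Finset.disjoint_insert_left.mpr
        ⟨hvB, hdAB.mono_left (Finset.erase_subset _ _)⟩
    · refine Finset.disjoint_insert_left.mpr ⟨?_, Finset.disjoint_insert_right.mpr
        ⟨Finset.notMem_erase w A, hdAC.mono_left (Finset.erase_subset _ _)⟩⟩
      simp only [Finset.mem_insert]
      push_neg
      exact ⟨hvw, hvC⟩
    · exact Finset.disjoint_insert_right.mpr ⟨hwB, hdBC⟩
    · ext x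
      rw [hSmem x]
      simp only [Finset.mem_union, Finset.mem_insert, Finset.mem_erase]
      by_cases hxw : x = w <;> by_cases hxv : x = v <;> simp [hxw, hxv] <;> tauto
    · rw [abs_le]; omega
    · rw [abs_le]; omega
    · rw [abs_le]; omega
    · refine degOn_insert (degOn_mono (Finset.coe_subset.mpr (Finset.erase_subset _ _)) hA) ?_
      exact le_trans (Finset.card_le_card
        (Finset.filter_subset_filter _ (Finset.erase_subset _ _))) hfA
    · exact degOn_insert hC hwC2
  · -- w ∈ B : move w to C, put v in B's place
    have hwC : w ∉ C := Finset.disjoint_left.mp hdBC hwB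
    have hwA : w ∉ A := Finset.disjoint_right.mp hdAB hwB
    have hvw : v ≠ w := fun h => hvB (h ▸ hwB)
    have hc2 : (insert v (B.erase w)).card = C.card + 1 := by
      rw [Finset.card_insert_of_notMem (fun h => hvB (Finset.erase_subset _ _ h)),
        Finset.card_erase_of_mem hwB]
      omega
    have hc3 : (insert w C).card = C.card + 1 := Finset.card_insert_of_notMem hwC
    refine ⟨A, insert v (B.erase w), insert w C, ?_, ?_, ?_, ?_, ?_, ?_, ?_, hA, ?_, ?_⟩
    · exact Finset.disjoint_insert_right.mpr
        ⟨hvA, hdAB.mono_right (Finset.erase_subset _ _)⟩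
    · exact Finset.disjoint_insert_right.mpr ⟨hwA, hdAC⟩
    · refine Finset.disjoint_insert_left.mpr ⟨?_, Finset.disjoint_insert_right.mpr
        ⟨Finset.notMem_erase w B, hdBC.mono_left (Finset.erase_subset _ _)⟩⟩
      simp only [Finset.mem_insert]
      push_neg
      exact ⟨hvw, hvC⟩
    · ext x
      rw [hSmem x]
      simp only [Finset.mem_union, Finset.mem_insert, Finset.mem_erase]
      by_cases hxw : x = w <;> by_cases hxv : x = v <;> simp [hxw, hxv] <;> tauto
    · rw [abs_le]; omega
    · rw [abs_le]; omega
    · rw [abs_le]; omega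
    · refine degOn_insert (degOn_mono (Finset.coe_subset.mpr (Finset.erase_subset _ _)) hB) ?_
      exact le_trans (Finset.card_le_card
        (Finset.filter_subset_filter _ (Finset.erase_subset _ _))) hfB
    · exact degOn_insert hC hwC2

lemma main (G : SimpleGraph V) [DecidableRel G.Adj]
    (hdeg : ∀ H : G.Subgraph, H.verts.Nonempty → ∃ v ∈ H.verts, (H.neighborSet v).ncard ≤ 5)
    (hbip : ∀ H : G.Subgraph, ∀ X Y : Set V, X ∪ Y = H.verts → Disjoint X Y →
      (∀ u v, H.Adj u v → (u ∈ X ∧ v ∈ Y) ∨ (u ∈ Y ∧ v ∈ X)) →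
      3 ≤ H.verts.ncard → H.edgeSet.ncard ≤ 2 * H.verts.ncard - 4) :
    ∀ (n : ℕ) (S : Finset V), S.card = n →
    ∃ V₁ V₂ V₃ : Finset V,
      Disjoint V₁ V₂ ∧ Disjoint V₁ V₃ ∧ Disjoint V₂ V₃ ∧
      V₁ ∪ V₂ ∪ V₃ = S ∧
      |(V₁.card : ℤ) - V₂.card| ≤ 1 ∧ |(V₁.card : ℤ) - V₃.card| ≤ 1 ∧
      |(V₂.card : ℤ) - V₃.card| ≤ 1 ∧
      DegenerateOn G 2 ↑V₁ ∧ DegenerateOn G 2 ↑V₂ ∧ DegenerateOn G 2 ↑V₃ := by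
  intro n
  induction n with
  | zero =>
    intro S hS
    refine ⟨∅, ∅, ∅, by simp, by simp, by simp, by simp [Finset.card_eq_zero.mp hS],
      by simp, by simp, by simp, degOn_empty, degOn_empty, degOn_empty⟩
  | succ n ih =>
    intro S hS
    have hSne : S.Nonempty := by rw [← Finset.card_pos, hS]; omega
    obtain ⟨v, hv1, hv2⟩ := hdeg ((⊤ : G.Subgraph).induce ↑S)
      (by rw [Subgraph.induce_verts]; exact Finset.coe_nonempty.mpr hSne)
    rw [Subgraph.induce_verts] at hv1
    have hvS : v ∈ S := Finset.mem_coe.mp hv1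
    have hnbr : ((⊤ : G.Subgraph).induce ↑S).neighborSet v =
        ↑(S.filter (fun w => G.Adj v w)) := by
      ext w
      simp only [Subgraph.mem_neighborSet, Subgraph.induce_adj, Subgraph.top_adj,
        Finset.coe_filter, Set.mem_setOf_eq, Finset.mem_coe]
      tauto
    rw [hnbr, Set.ncard_coe_finset] at hv2
    have hcard : (S.erase v).card = n := by
      rw [Finset.card_erase_of_mem hvS, hS]; omega
    obtain ⟨A, B, C, hdAB, hdAC, hdBC, hU, hab, hac, hbc, hA, hB, hC⟩ :=
      ih (S.erase v) hcard
    by_cases hAm : A.card ≤ B.card ∧ A.card ≤ C.card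
    · refine step G hbip hvS hv2 hdBC hdAB.symm hdAC.symm ?_
        hbc
        (by rw [abs_sub_comm]; exact hab)
        (by rw [abs_sub_comm]; exact hac) hB hC hA hAm.1 hAm.2
      rw [← hU]; ext x; simp [Finset.mem_union]; tauto
    by_cases hBm : B.card ≤ A.card ∧ B.card ≤ C.card
    · refine step G hbip hvS hv2 hdAC hdAB hdBC.symm ?_
        hac hab (by rw [abs_sub_comm]; exact hbc) hA hC hB hBm.1 hBm.2
      rw [← hU]; ext x; simp [Finset.mem_union]; tauto
    · push_neg at hAm hBm
      have hCm : C.card ≤ A.card ∧ C.card ≤ B.card := by omega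
      exact step G hbip hvS hv2 hdAB hdAC hdBC hU hab hac hbc hA hB hC hCm.1 hCm.2

end Aux

theorem equitable_three_partition_into_two_degenerate
    {V : Type*} [Fintype V] [DecidableEq V] (G : SimpleGraph V)
    (hdeg : ∀ H : G.Subgraph, H.verts.Nonempty → ∃ v ∈ H.verts, (H.neighborSet v).ncard ≤ 5)
    (hbip : ∀ H : G.Subgraph, ∀ X Y : Set V, X ∪ Y = H.verts → Disjoint X Y →
      (∀ u v, H.Adj u v → (u ∈ X ∧ v ∈ Y) ∨ (u ∈ Y ∧ v ∈ X)) →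
      3 ≤ H.verts.ncard → H.edgeSet.ncard ≤ 2 * H.verts.ncard - 4) :
    ∃ V₁ V₂ V₃ : Finset V,
      Disjoint V₁ V₂ ∧ Disjoint V₁ V₃ ∧ Disjoint V₂ V₃ ∧
      V₁ ∪ V₂ ∪ V₃ = Finset.univ ∧
      |(V₁.card : ℤ) - (V₂.card : ℤ)| ≤ 1 ∧
      |(V₁.card : ℤ) - (V₃.card : ℤ)| ≤ 1 ∧
      |(V₂.card : ℤ) - (V₃.card : ℤ)| ≤ 1 ∧
      DegenerateOn G 2 (V₁ : Set V) ∧ DegenerateOn G 2 (V₂ : Set V) ∧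
      DegenerateOn G 2 (V₃ : Set V) := by
  classical
  exact main G hdeg hbip Finset.univ.card Finset.univ rfl
end

section
/- Let G be a finite simple triangle-free graph such that every subgraph H of G with at least one vertex satisfies |E(H)| < 2|V(H)| (every triangle-free planar graph satisfies this condition). Then G admits an equitable 2-partition (V_1, V_2) of its vertex set such that both induced subgraphs G[V_1] and G[V_2] are 2-degenerate. -/
open SimpleGraph

open scoped Classical

section Aux

variable {V : Type*} [Fintype V] [DecidableEq V]

/-- degree of `v` inside the finset `S`. -/
noncomputable def dIn (G : SimpleGraph V) (S : Finset V) (v : V) : ℕ :=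
  (S.filter fun w => G.Adj v w).card

lemma dIn_le_card (G : SimpleGraph V) (S : Finset V) (v : V) : dIn G S v ≤ S.card :=
  Finset.card_filter_le _ _

lemma erase_erase_comm (S : Finset V) (a b : V) :
    (S.erase a).erase b = (S.erase b).erase a := by
  ext x
  simp only [Finset.mem_erase]
  tauto

/-- Handshake + sparsity: the sum of internal degrees over a nonempty finset. -/
lemma sumDeg_le (G : SimpleGraph V)
    (hG : ∀ H : G.Subgraph, H.verts.Nonempty → H.edgeSet.ncard < 2 * H.verts.ncard)
    (S : Finset V) (hS : S.Nonempty) :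
    (∑ v ∈ S, dIn G S v) + 2 ≤ 4 * S.card := by
  set H : G.Subgraph :=
    { verts := ↑S
      Adj := fun a b => a ∈ S ∧ b ∈ S ∧ G.Adj a b
      adj_sub := fun h => h.2.2
      edge_vert := fun h => h.1
      symm := ⟨fun a b h => ⟨h.2.1, h.1, h.2.2.symm⟩⟩ } with hH
  have hvne : H.verts.Nonempty := by
    obtain ⟨x, hx⟩ := hS
    exact ⟨x, by simpa [hH] using hx⟩
  have hsp : H.edgeSet.ncard < 2 * S.card := by
    have := hG H hvne
    simpa [hH, Set.ncard_coe_finset] using this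
  letI : DecidableRel H.spanningCoe.Adj := fun a b => Classical.dec _
  have hand := SimpleGraph.sum_degrees_eq_twice_card_edges H.spanningCoe
  have hnbr : ∀ v ∈ S, H.spanningCoe.neighborFinset v = S.filter fun w => G.Adj v w := by
    intro v hv
    ext w
    simp only [SimpleGraph.mem_neighborFinset, Finset.mem_filter]
    change (v ∈ S ∧ w ∈ S ∧ G.Adj v w) ↔ _
    tauto
  have hdeg : ∀ v ∈ S, H.spanningCoe.degree v = dIn G S v := by
    intro v hv
    rw [← SimpleGraph.card_neighborFinset_eq_degree, hnbr v hv, dIn]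
  have hdeg0 : ∀ v ∈ Finset.univ, v ∉ S → H.spanningCoe.degree v = 0 := by
    intro v _ hv
    rw [← SimpleGraph.card_neighborFinset_eq_degree, Finset.card_eq_zero]
    ext w
    simp only [SimpleGraph.mem_neighborFinset, Finset.notMem_empty, iff_false]
    intro h
    exact hv h.1
  have hsum : (∑ v ∈ S, dIn G S v) = ∑ v, H.spanningCoe.degree v := by
    rw [← Finset.sum_subset (Finset.subset_univ S) hdeg0]
    exact Finset.sum_congr rfl fun v hv => (hdeg v hv).symm
  have hedgecard : H.spanningCoe.edgeFinset.card = H.edgeSet.ncard := by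
    have h1 : H.spanningCoe.edgeSet = H.edgeSet := rfl
    rw [SimpleGraph.edgeFinset, ← Set.ncard_eq_toFinset_card', h1]
  omega

lemma exists_small (G : SimpleGraph V)
    (hG : ∀ H : G.Subgraph, H.verts.Nonempty → H.edgeSet.ncard < 2 * H.verts.ncard)
    (S : Finset V) (hS : S.Nonempty) : ∃ v ∈ S, dIn G S v ≤ 3 := by
  by_contra h
  push_neg at h
  have h4 : 4 * S.card ≤ ∑ v ∈ S, dIn G S v := by
    calc 4 * S.card = S.card • 4 := by rw [smul_eq_mul]; ring
      _ ≤ ∑ v ∈ S, dIn G S v :=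
        Finset.card_nsmul_le_sum S _ 4 (fun x hx => by have := h x hx; omega)
  have := sumDeg_le G hG S hS
  omega

lemma exists_partner (G : SimpleGraph V)
    (hG : ∀ H : G.Subgraph, H.verts.Nonempty → H.edgeSet.ncard < 2 * H.verts.ncard)
    (S : Finset V) (h2 : 2 ≤ S.card) (u : V) (hu : u ∈ S) :
    ∃ v ∈ S, v ≠ u ∧ dIn G S v ≤ 5 := by
  by_contra h
  push_neg at h
  have hne : (S.erase u).Nonempty := by
    rw [← Finset.card_pos, Finset.card_erase_of_mem hu]; omega
  obtain ⟨w, hw⟩ := hne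
  have hwS : w ∈ S := Finset.mem_of_mem_erase hw
  have hw6 : 6 ≤ dIn G S w := by
    have := h w hwS (Finset.ne_of_mem_erase hw); omega
  have hwle : dIn G S w ≤ S.card := dIn_le_card G S w
  have hsum : (S.card - 1) * 6 ≤ ∑ v ∈ S, dIn G S v := by
    calc (S.card - 1) * 6 = (S.erase u).card • 6 := by
          rw [Finset.card_erase_of_mem hu, smul_eq_mul]
      _ ≤ ∑ v ∈ S.erase u, dIn G S v :=
          Finset.card_nsmul_le_sum _ _ 6 (fun x hx => by
            have := h x (Finset.mem_of_mem_erase hx) (Finset.ne_of_mem_erase hx); omega)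
      _ ≤ ∑ v ∈ S, dIn G S v :=
          Finset.sum_le_sum_of_subset (Finset.erase_subset _ _)
  have := sumDeg_le G hG S ⟨u, hu⟩
  omega

lemma sum_adj_comm (G : SimpleGraph V) (L Hi : Finset V) :
    ∑ v ∈ L, (Hi.filter fun w => G.Adj v w).card
      = ∑ w ∈ Hi, (L.filter fun v => G.Adj w v).card := by
  simp only [Finset.card_filter]
  rw [Finset.sum_comm]
  refine Finset.sum_congr rfl fun w _ => Finset.sum_congr rfl fun v _ => ?_
  by_cases h : G.Adj v w
  · simp [h, h.symm]
  · have h' : ¬ G.Adj w v := fun hc => h hc.symm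
    simp [h, h']

/-- The counting contradiction in the "hard core" case. -/
lemma hardcore_false (G : SimpleGraph V)
    (hG : ∀ H : G.Subgraph, H.verts.Nonempty → H.edgeSet.ncard < 2 * H.verts.ncard)
    (S : Finset V)
    (h3 : ∀ v ∈ S, 3 ≤ dIn G S v)
    (h6 : ∀ v ∈ S, dIn G S v ≤ 3 → ∀ t ∈ S, G.Adj v t → 6 ≤ dIn G S t)
    (u : V) (huS : u ∈ S) (hu3 : dIn G S u ≤ 3) : False := by
  set L := S.filter (fun v => dIn G S v ≤ 3) with hL
  set Hi := S.filter (fun v => 6 ≤ dIn G S v) with hHi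
  set M := S.filter (fun v => ¬ dIn G S v ≤ 3 ∧ ¬ 6 ≤ dIn G S v) with hM
  have hLS : L ⊆ S := Finset.filter_subset _ _
  have hHiS : Hi ⊆ S := Finset.filter_subset _ _
  have hdLHi : Disjoint L Hi := by
    rw [Finset.disjoint_left]
    intro a haL haHi
    rw [hL, Finset.mem_filter] at haL
    rw [hHi, Finset.mem_filter] at haHi
    omega
  have hdLM : Disjoint L M := by
    rw [Finset.disjoint_left]
    intro a haL haM
    rw [hL, Finset.mem_filter] at haL
    rw [hM, Finset.mem_filter] at haM
    exact haM.2.1 haL.2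
  have hdHiM : Disjoint Hi M := by
    rw [Finset.disjoint_left]
    intro a haHi haM
    rw [hHi, Finset.mem_filter] at haHi
    rw [hM, Finset.mem_filter] at haM
    exact haM.2.2 haHi.2
  have hdLHiM : Disjoint (L ∪ Hi) M := by
    rw [Finset.disjoint_union_left]; exact ⟨hdLM, hdHiM⟩
  have hunion : (L ∪ Hi) ∪ M = S := by
    ext a
    simp only [Finset.mem_union, hL, hHi, hM, Finset.mem_filter]
    constructor
    · rintro ((h | h) | h) <;> exact h.1
    · intro ha
      by_cases h1 : dIn G S a ≤ 3
      · exact Or.inl (Or.inl ⟨ha, h1⟩)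
      · by_cases h2 : 6 ≤ dIn G S a
        · exact Or.inl (Or.inr ⟨ha, h2⟩)
        · exact Or.inr ⟨ha, h1, h2⟩
  have hcard : S.card = L.card + Hi.card + M.card := by
    rw [← hunion, Finset.card_union_of_disjoint hdLHiM,
      Finset.card_union_of_disjoint hdLHi]
  -- first count on S
  have hsumS : 3 * L.card + 6 * Hi.card + 4 * M.card ≤ ∑ v ∈ S, dIn G S v := by
    have hq : ∑ v ∈ S, dIn G S v
        = ∑ v ∈ L, dIn G S v + ∑ v ∈ Hi, dIn G S v + ∑ v ∈ M, dIn G S v := by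
      rw [← Finset.sum_union hdLHi, ← Finset.sum_union hdLHiM, hunion]
    have b1 : 3 * L.card ≤ ∑ v ∈ L, dIn G S v := by
      calc 3 * L.card = L.card • 3 := by rw [smul_eq_mul]; ring
        _ ≤ _ := Finset.card_nsmul_le_sum _ _ 3 (fun x hx => h3 x (hLS hx))
    have b2 : 6 * Hi.card ≤ ∑ v ∈ Hi, dIn G S v := by
      calc 6 * Hi.card = Hi.card • 6 := by rw [smul_eq_mul]; ring
        _ ≤ _ := Finset.card_nsmul_le_sum _ _ 6 (fun x hx => by
          rw [hHi, Finset.mem_filter] at hx; exact hx.2)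
    have b3 : 4 * M.card ≤ ∑ v ∈ M, dIn G S v := by
      calc 4 * M.card = M.card • 4 := by rw [smul_eq_mul]; ring
        _ ≤ _ := Finset.card_nsmul_le_sum _ _ 4 (fun x hx => by
          rw [hM, Finset.mem_filter] at hx; omega)
    omega
  have hS1 := sumDeg_le G hG S ⟨u, huS⟩
  have key1 : 2 * Hi.card + 2 ≤ L.card := by omega
  -- second count on T = L ∪ Hi
  set T := L ∪ Hi with hT
  have hTS : T ⊆ S := Finset.union_subset hLS hHiS
  have huL : u ∈ L := by rw [hL, Finset.mem_filter]; exact ⟨huS, hu3⟩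
  have hkey : ∀ v ∈ L, (S.filter fun w => G.Adj v w) ⊆ Hi := by
    intro v hv t ht
    rw [Finset.mem_filter] at ht
    rw [hL, Finset.mem_filter] at hv
    rw [hHi, Finset.mem_filter]
    exact ⟨ht.1, h6 v hv.1 hv.2 t ht.1 ht.2⟩
  have hLfull : ∀ v ∈ L, (T.filter fun w => G.Adj v w) = S.filter fun w => G.Adj v w := by
    intro v hv
    apply Finset.Subset.antisymm
    · exact Finset.filter_subset_filter _ hTS
    · intro t ht
      have htHi : t ∈ Hi := hkey v hv ht
      rw [Finset.mem_filter] at ht ⊢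
      exact ⟨Finset.mem_union_right _ htHi, ht.2⟩
  have hHifull : ∀ v ∈ L, (Hi.filter fun w => G.Adj v w) = S.filter fun w => G.Adj v w := by
    intro v hv
    apply Finset.Subset.antisymm
    · exact Finset.filter_subset_filter _ hHiS
    · intro t ht
      have htHi : t ∈ Hi := hkey v hv ht
      rw [Finset.mem_filter] at ht ⊢
      exact ⟨htHi, ht.2⟩
  have hdval : ∀ v ∈ L, dIn G S v = 3 := by
    intro v hv
    have h1 := h3 v (hLS hv)
    rw [hL, Finset.mem_filter] at hv
    omega
  have hsumL : ∑ v ∈ L, dIn G T v = 3 * L.card := by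
    rw [Finset.sum_congr rfl (fun v hv => ?_), Finset.sum_const, smul_eq_mul, mul_comm]
    show dIn G T v = 3
    rw [dIn, hLfull v hv, ← dIn, hdval v hv]
  have hsumHi : 3 * L.card ≤ ∑ v ∈ Hi, dIn G T v := by
    have e1 : ∑ v ∈ L, (Hi.filter fun w => G.Adj v w).card = 3 * L.card := by
      rw [Finset.sum_congr rfl (fun v hv => ?_), Finset.sum_const, smul_eq_mul, mul_comm]
      show (Hi.filter fun w => G.Adj v w).card = 3
      rw [hHifull v hv, ← dIn, hdval v hv]
    have e2 := sum_adj_comm G L Hi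
    rw [e1] at e2
    calc 3 * L.card = ∑ w ∈ Hi, (L.filter fun v => G.Adj w v).card := e2
      _ ≤ ∑ w ∈ Hi, dIn G T w := by
        refine Finset.sum_le_sum fun w _ => ?_
        exact Finset.card_le_card
          (Finset.filter_subset_filter _ (Finset.subset_union_left))
  have hsumT : 6 * L.card ≤ ∑ v ∈ T, dIn G T v := by
    rw [hT, Finset.sum_union hdLHi, ← hT]
    omega
  have hTcard : T.card = L.card + Hi.card := Finset.card_union_of_disjoint hdLHi
  have hS2 := sumDeg_le G hG T ⟨u, Finset.mem_union_left _ huL⟩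
  omega

lemma degenerateOn_of_card_le (G : SimpleGraph V) {S : Finset V} (h : S.card ≤ 3) :
    DegenerateOn G 2 (S : Set V) := by
  rintro T hT ⟨x, hx⟩
  refine ⟨x, hx, ?_⟩
  have hxS : x ∈ S := hT hx
  have hsub : G.neighborSet x ∩ T ⊆ ↑(S.erase x) := by
    rintro y ⟨hy1, hy2⟩
    have hyS : y ∈ S := hT hy2
    have hxy : x ≠ y := G.ne_of_adj hy1
    simp only [Finset.coe_erase, Set.mem_diff, Set.mem_singleton_iff, Finset.mem_coe]
    exact ⟨hyS, fun hc => hxy hc.symm⟩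
  calc (G.neighborSet x ∩ T).ncard ≤ ((S.erase x : Finset V) : Set V).ncard :=
        Set.ncard_le_ncard hsub (Finset.finite_toSet _)
    _ = (S.erase x).card := Set.ncard_coe_finset _
    _ ≤ 2 := by rw [Finset.card_erase_of_mem hxS]; omega

lemma degenerateOn_insert (G : SimpleGraph V) {A : Finset V} {v : V}
    (hA : DegenerateOn G 2 (A : Set V))
    (hv : (A.filter fun w => G.Adj v w).card ≤ 2) :
    DegenerateOn G 2 ((insert v A : Finset V) : Set V) := by
  intro T hT hTne
  by_cases hvT : v ∈ T
  · refine ⟨v, hvT, ?_⟩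
    have hsub : G.neighborSet v ∩ T ⊆ ↑(A.filter fun w => G.Adj v w) := by
      rintro x ⟨hx1, hx2⟩
      have hxA := hT hx2
      simp only [Finset.coe_insert, Set.mem_insert_iff, Finset.mem_coe] at hxA
      rcases hxA with rfl | hxA
      · exact absurd hx1 (G.irrefl)
      · simp only [Finset.mem_coe, Finset.mem_filter]
        exact ⟨hxA, hx1⟩
    calc (G.neighborSet v ∩ T).ncard
        ≤ ((A.filter fun w => G.Adj v w : Finset V) : Set V).ncard :=
          Set.ncard_le_ncard hsub (Finset.finite_toSet _)
      _ = (A.filter fun w => G.Adj v w).card := Set.ncard_coe_finset _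
      _ ≤ 2 := hv
  · refine hA T ?_ hTne
    intro x hx
    have hxA := hT hx
    simp only [Finset.coe_insert, Set.mem_insert_iff, Finset.mem_coe] at hxA
    rcases hxA with rfl | hxA
    · exact absurd hx hvT
    · exact hxA

lemma step_lemma (G : SimpleGraph V) {S X Y : Finset V} {u v : V}
    (hu : u ∈ S) (hv : v ∈ S) (huv : u ≠ v)
    (hd : Disjoint X Y) (hU : X ∪ Y = (S.erase u).erase v)
    (hbal : |(X.card : ℤ) - Y.card| ≤ 1)
    (hdX : DegenerateOn G 2 (X : Set V)) (hdY : DegenerateOn G 2 (Y : Set V))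
    (hvX : (X.filter fun w => G.Adj v w).card ≤ 2)
    (huY : (Y.filter fun w => G.Adj u w).card ≤ 2) :
    ∃ A B : Finset V, Disjoint A B ∧ A ∪ B = S ∧ |(A.card : ℤ) - (B.card : ℤ)| ≤ 1 ∧
      DegenerateOn G 2 (A : Set V) ∧ DegenerateOn G 2 (B : Set V) := by
  have hXsub : X ⊆ (S.erase u).erase v := hU ▸ Finset.subset_union_left
  have hYsub : Y ⊆ (S.erase u).erase v := hU ▸ Finset.subset_union_right
  have hvX' : v ∉ X := fun hc => (Finset.mem_erase.mp (hXsub hc)).1 rfl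
  have hvY' : v ∉ Y := fun hc => (Finset.mem_erase.mp (hYsub hc)).1 rfl
  have huX' : u ∉ X := fun hc =>
    (Finset.mem_erase.mp (Finset.mem_of_mem_erase (hXsub hc))).1 rfl
  have huY' : u ∉ Y := fun hc =>
    (Finset.mem_erase.mp (Finset.mem_of_mem_erase (hYsub hc))).1 rfl
  refine ⟨insert v X, insert u Y, ?_, ?_, ?_, ?_, ?_⟩
  · rw [Finset.disjoint_left]
    intro a ha hb
    rw [Finset.mem_insert] at ha hb
    rcases ha with rfl | ha
    · rcases hb with h | h
      · exact huv h.symm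
      · exact hvY' h
    · rcases hb with rfl | hb
      · exact huX' ha
      · exact (Finset.disjoint_left.mp hd ha) hb
  · rw [Finset.insert_union, Finset.union_insert, hU, erase_erase_comm _ _ _,
      Finset.insert_erase (Finset.mem_erase.mpr ⟨huv, hu⟩),
      Finset.insert_erase hv]
  · rw [Finset.card_insert_of_notMem hvX', Finset.card_insert_of_notMem huY']
    push_cast
    rw [show ((X.card : ℤ) + 1) - (Y.card + 1) = (X.card : ℤ) - Y.card by ring]
    exact hbal
  · exact degenerateOn_insert G hdX hvX
  · exact degenerateOn_insert G hdY huY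

lemma main_partition (G : SimpleGraph V)
    (hG : ∀ H : G.Subgraph, H.verts.Nonempty → H.edgeSet.ncard < 2 * H.verts.ncard) :
    ∀ n (S : Finset V), S.card = n →
      ∃ A B : Finset V, Disjoint A B ∧ A ∪ B = S ∧
        |(A.card : ℤ) - (B.card : ℤ)| ≤ 1 ∧
        DegenerateOn G 2 (A : Set V) ∧ DegenerateOn G 2 (B : Set V) := by
  intro n
  induction n using Nat.strong_induction_on with
  | _ n ih =>
    intro S hScard
    by_cases hn1 : S.card ≤ 1
    · refine ⟨S, ∅, Finset.disjoint_empty_right _, Finset.union_empty _, ?_, ?_, ?_⟩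
      · simp only [Finset.card_empty, Nat.cast_zero, sub_zero]
        rw [abs_of_nonneg (by positivity)]
        exact_mod_cast hn1
      · exact degenerateOn_of_card_le G (by omega)
      · exact degenerateOn_of_card_le G (by simp)
    push_neg at hn1
    have hn2 : 2 ≤ S.card := hn1
    by_cases hpair : ∃ u ∈ S, ∃ v ∈ S, u ≠ v ∧ dIn G S v ≤ 5 ∧
        ((S.erase v).filter fun w => G.Adj u w).card ≤ 2
    · obtain ⟨u, hu, v, hv, huv, hv5, hu2⟩ := hpair
      set S'' := (S.erase u).erase v with hS''
      have hvS' : v ∈ S.erase u := Finset.mem_erase.mpr ⟨huv.symm, hv⟩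
      have hS''card : S''.card = n - 2 := by
        rw [hS'', Finset.card_erase_of_mem hvS', Finset.card_erase_of_mem hu, hScard]
        omega
      have hlt : n - 2 < n := by omega
      obtain ⟨A', B', hd, hUn, hbal, hdA, hdB⟩ := ih (n - 2) hlt S'' hS''card
      -- minority side for v
      have hsplit : (A'.filter fun w => G.Adj v w).card
          + (B'.filter fun w => G.Adj v w).card ≤ 5 := by
        have hdisjf : Disjoint (A'.filter fun w => G.Adj v w)
            (B'.filter fun w => G.Adj v w) :=
          Finset.disjoint_filter_filter hd
        rw [← Finset.card_union_of_disjoint hdisjf, ← Finset.filter_union, hUn]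
        calc (((S.erase u).erase v).filter fun w => G.Adj v w).card
            ≤ (S.filter fun w => G.Adj v w).card :=
              Finset.card_le_card (Finset.filter_subset_filter _
                (fun x hx => Finset.mem_of_mem_erase (Finset.mem_of_mem_erase hx)))
          _ ≤ 5 := hv5
      have hB'sub : B' ⊆ S.erase v := by
        intro x hx
        have h1 : x ∈ S'' := hUn ▸ Finset.mem_union_right A' hx
        rw [hS'', erase_erase_comm _ _ _] at h1
        exact Finset.mem_of_mem_erase h1
      have hA'sub : A' ⊆ S.erase v := by
        intro x hx
        have h1 : x ∈ S'' := hUn ▸ Finset.mem_union_left B' hx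
        rw [hS'', erase_erase_comm _ _ _] at h1
        exact Finset.mem_of_mem_erase h1
      rcases le_or_gt (A'.filter fun w => G.Adj v w).card 2 with hAm | hAm
      · -- v joins A', u joins B'
        have huB : (B'.filter fun w => G.Adj u w).card ≤ 2 :=
          le_trans (Finset.card_le_card (Finset.filter_subset_filter _ hB'sub)) hu2
        exact step_lemma G hu hv huv hd hUn hbal hdA hdB hAm huB
      · -- v joins B', u joins A'
        have hBm : (B'.filter fun w => G.Adj v w).card ≤ 2 := by omega
        have huA : (A'.filter fun w => G.Adj u w).card ≤ 2 :=
          le_trans (Finset.card_le_card (Finset.filter_subset_filter _ hA'sub)) hu2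
        have hbal' : |(B'.card : ℤ) - A'.card| ≤ 1 := by
          rw [abs_sub_comm]; exact hbal
        exact step_lemma G hu hv huv hd.symm (by rw [Finset.union_comm]; exact hUn)
          hbal' hdB hdA hBm huA
    · -- hard core: derive a contradiction
      exfalso
      push_neg at hpair
      have h3 : ∀ v ∈ S, 3 ≤ dIn G S v := by
        intro v hvS
        by_contra hc
        push_neg at hc
        obtain ⟨w, hwS, hwv, hw5⟩ := exists_partner G hG S hn2 v hvS
        have := hpair v hvS w hwS hwv.symm hw5
        have hle : ((S.erase w).filter fun x => G.Adj v x).card ≤ 2 := by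
          calc ((S.erase w).filter fun x => G.Adj v x).card
              ≤ (S.filter fun x => G.Adj v x).card :=
                Finset.card_le_card (Finset.filter_subset_filter _ (Finset.erase_subset _ _))
            _ ≤ 2 := by rw [← dIn] at *; omega
        omega
      have h6 : ∀ v ∈ S, dIn G S v ≤ 3 → ∀ t ∈ S, G.Adj v t → 6 ≤ dIn G S t := by
        intro v hvS hv3 t htS hadj
        by_contra hc
        push_neg at hc
        have ht5 : dIn G S t ≤ 5 := by omega
        have hvt : v ≠ t := G.ne_of_adj hadj
        have := hpair v hvS t htS hvt ht5
        have hsub : ((S.erase t).filter fun x => G.Adj v x)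
            ⊆ (S.filter fun x => G.Adj v x).erase t := by
          intro x hx
          rw [Finset.mem_filter, Finset.mem_erase] at hx
          rw [Finset.mem_erase, Finset.mem_filter]
          exact ⟨hx.1.1, hx.1.2, hx.2⟩
        have htmem : t ∈ S.filter fun x => G.Adj v x :=
          Finset.mem_filter.mpr ⟨htS, hadj⟩
        have hle : ((S.erase t).filter fun x => G.Adj v x).card ≤ 2 := by
          calc ((S.erase t).filter fun x => G.Adj v x).card
              ≤ ((S.filter fun x => G.Adj v x).erase t).card := Finset.card_le_card hsub
            _ = (S.filter fun x => G.Adj v x).card - 1 :=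
                Finset.card_erase_of_mem htmem
            _ ≤ 2 := by rw [← dIn]; omega
        omega
      obtain ⟨w, hwS, hw3⟩ := exists_small G hG S (by
        rw [← Finset.card_pos]; omega)
      exact hardcore_false G hG S h3 h6 w hwS hw3

end Aux

theorem equitable_two_partition_triangle_free
    {V : Type*} [Fintype V] [DecidableEq V] (G : SimpleGraph V)
    (htf : G.CliqueFree 3)
    (hsparse : ∀ H : G.Subgraph, H.verts.Nonempty → H.edgeSet.ncard < 2 * H.verts.ncard) :
    ∃ V₁ V₂ : Finset V,
      Disjoint V₁ V₂ ∧ V₁ ∪ V₂ = Finset.univ ∧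
      |(V₁.card : ℤ) - (V₂.card : ℤ)| ≤ 1 ∧
      DegenerateOn G 2 (V₁ : Set V) ∧ DegenerateOn G 2 (V₂ : Set V) := by
  obtain ⟨A, B, h1, h2, h3, h4, h5⟩ :=
    main_partition G hsparse (Finset.univ.card) Finset.univ rfl
  exact ⟨A, B, h1, h2, h3, h4, h5⟩
end

section
/- Let G be a finite simple graph with at least one vertex such that |E(G)| < 2|V(G)|. Then G contains a vertex of degree at most 2, or an edge uv such that deg(u) = 3 and deg(v) ≤ 6. Equivalently (contrapositive): if every vertex of G has degree at least 3 and no edge of G joins a vertex of degree exactly 3 to a vertex of degree at most 6, then the sum of the degrees of G is at least 4|V(G)|, i.e. |E(G)| ≥ 2|V(G)|. -/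
/-!
Discharging: give each vertex of degree `d` the charge `3d - 12`, so the total charge is
`6|E| - 12|V|`. Each degree-3 vertex takes `1` from each of its three neighbours; these have
degree at least 7 and so keep `2d - 12 > 0`, while vertices of degree 4 to 6 keep their
non-negative charge. Hence every final charge is non-negative and `|E| ≥ 2|V|`.
-/

open Finset

namespace SimpleGraph

variable {V : Type*} [Fintype V] (G : SimpleGraph V) [DecidableRel G.Adj]

theorem sum_card_filter_adj_eq_sum_degree (s : Finset V) :
    ∑ v, #{u ∈ s | G.Adj v u} = ∑ u ∈ s, G.degree u := by
  refine (sum_card_bipartiteAbove_eq_sum_card_bipartiteBelow G.Adj).trans ?_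
  refine sum_congr rfl fun u _ => ?_
  simp only [bipartiteBelow, ← card_neighborFinset_eq_degree, neighborFinset_eq_filter, adj_comm]

/-- The final charge of `v` is non-negative: the `if` term is what `v` receives, the filtered
count is what it sends to its degree-3 neighbours. -/
theorem discharging_le (hmin : ∀ v, 2 < G.degree v)
    (hlight : ∀ u v, G.Adj u v → G.degree u = 3 → 6 < G.degree v) (v : V) :
    12 + #{u | G.degree u = 3 ∧ G.Adj v u} ≤
      3 * G.degree v + if G.degree v = 3 then 3 else 0 := by
  have hcount : #{u | G.degree u = 3 ∧ G.Adj v u} ≤ G.degree v := by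
    rw [← card_neighborFinset_eq_degree, neighborFinset_eq_filter]
    exact card_le_card fun u => by simp +contextual
  have hlow (hv : G.degree v ≤ 6) : #{u | G.degree u = 3 ∧ G.Adj v u} = 0 := by
    refine card_eq_zero.2 (filter_eq_empty_iff.2 fun u _ ⟨hu, huv⟩ => ?_)
    have := hlight u v huv.symm hu
    omega
  have := hmin v
  split_ifs <;> omega

theorem four_mul_card_le_sum_degrees (hmin : ∀ v, 2 < G.degree v)
    (hlight : ∀ u v, G.Adj u v → G.degree u = 3 → 6 < G.degree v) :
    4 * Fintype.card V ≤ ∑ v, G.degree v := by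
  have hS : ∑ v, (if G.degree v = 3 then 3 else 0) = ∑ u with G.degree u = 3, G.degree u := by
    rw [← sum_filter]; exact sum_congr rfl fun u hu => (mem_filter.1 hu).2.symm
  have hcharge := sum_le_sum fun v (_ : v ∈ univ) => G.discharging_le hmin hlight v
  simp only [sum_add_distrib, ← mul_sum, hS, ← filter_filter, sum_const, card_univ,
    smul_eq_mul, G.sum_card_filter_adj_eq_sum_degree] at hcharge
  omega

end SimpleGraph

theorem low_degree_vertex_or_edge_general
    {V : Type*} [Fintype V] (G : SimpleGraph V) [DecidableRel G.Adj]
    (hE : G.edgeFinset.card < 2 * Fintype.card V) :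
    (∃ v : V, G.degree v ≤ 2) ∨
    (∃ u v : V, G.Adj u v ∧ G.degree u = 3 ∧ G.degree v ≤ 6) := by
  by_contra! h
  have hdeg := G.four_mul_card_le_sum_degrees h.1 h.2
  rw [G.sum_degrees_eq_twice_card_edges] at hdeg
  omega

theorem low_degree_vertex_or_edge
    {V : Type*} [Fintype V] [DecidableEq V] (G : SimpleGraph V) [DecidableRel G.Adj]
    (hV : 0 < Fintype.card V)
    (hE : G.edgeFinset.card < 2 * Fintype.card V) :
    (∃ v : V, G.degree v ≤ 2) ∨
    (∃ u v : V, G.Adj u v ∧ G.degree u = 3 ∧ G.degree v ≤ 6) :=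
  low_degree_vertex_or_edge_general G hE
end

section
/- If a finite simple graph G on n vertices admits an acyclic 5-coloring, then G admits an equitable 3-partition (V_1, V_2, V_3) of its vertex set such that the induced subgraphs G[V_1] and G[V_2] are both forests (no condition is imposed on G[V_3]). In particular (via Borodin's theorem that every planar graph has an acyclic 5-coloring), every planar graph admits an equitable 3-partition into two forests and one graph. -/
/-!
Any set contained in the union of two colour classes of an acyclic colouring induces a forest, so
it suffices to find disjoint `V₁, V₂` of sizes `⌈n/3⌉` and `⌊(n+1)/3⌋`, each inside the union of
two colour classes; `V₃` is the rest. Sort the classes by size, `|D₀| ≥ ⋯ ≥ |D₄|`. If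
`|D₁| > |V₁|`, take `V₁ ⊆ D₀` and `V₂ ⊆ D₁`. Otherwise, if `|D₀| + |D₁| + |D₂| ≥ |V₁| + |V₂|`,
fill `V₁` with `D₁` and then part of `D₀`, and `V₂` with the rest of `D₀` and then `D₂`. If not,
`|D₃| + |D₄| > n/3`, hence `D₀ ∪ D₁` and `D₂ ∪ D₃` are large enough to host `V₁` and `V₂`.
-/

open SimpleGraph

/-- An acyclic `k`-coloring of `G`: a partition of the vertex set into `k` independent sets
such that the union of any two color classes induces a forest. -/
def IsAcyclicColoring {V : Type*} (G : SimpleGraph V) (k : ℕ) (A : Fin k → Set V) : Prop :=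
  (∀ i j, i ≠ j → Disjoint (A i) (A j)) ∧
  (⋃ i, A i) = Set.univ ∧
  (∀ i, ∀ u ∈ A i, ∀ v ∈ A i, ¬ G.Adj u v) ∧
  (∀ i j, i ≠ j → (G.induce (A i ∪ A j)).IsAcyclic)

open Finset

theorem Tuple.exists_perm_antitone_comp {α : Type*} [LinearOrder α] {k : ℕ} (f : Fin k → α) :
    ∃ e : Equiv.Perm (Fin k), Antitone (f ∘ e) :=
  ⟨Tuple.sort f * Fin.revPerm, fun _ _ h => Tuple.monotone_sort f (Fin.rev_anti h)⟩

theorem Finset.sum_card_toFinset_eq_card {ι V : Type*} [Fintype ι] [Fintype V] [DecidableEq V]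
    {A : ι → Set V} [∀ i, DecidablePred (· ∈ A i)] (hdisj : ∀ i j, i ≠ j → Disjoint (A i) (A j))
    (hcover : (⋃ i, A i) = Set.univ) :
    ∑ i, #(A i).toFinset = Fintype.card V := by
  rw [← card_biUnion fun i _ j _ hij => Set.disjoint_toFinset.mpr (hdisj i j hij)]
  congr
  simpa [eq_univ_iff_forall, Set.eq_univ_iff_forall] using hcover

section

variable {V : Type*} {a b : ℕ}

theorem Finset.exists_disjoint_subsets_card_eq {P Q : Finset V} (hPQ : Disjoint P Q)
    (ha : a ≤ #P) (hb : b ≤ #Q) :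
    ∃ W₁ W₂ : Finset V, Disjoint W₁ W₂ ∧ #W₁ = a ∧ #W₂ = b ∧ W₁ ⊆ P ∧ W₂ ⊆ Q := by
  obtain ⟨W₁, h₁, hc₁⟩ := exists_subset_card_eq ha
  obtain ⟨W₂, h₂, hc₂⟩ := exists_subset_card_eq hb
  exact ⟨W₁, W₂, hPQ.mono h₁ h₂, hc₁, hc₂, h₁, h₂⟩

/-- `W₁` is an initial segment of the concatenation `X, Y, Z` containing all of `X`, and `W₂` is
taken after it, hence misses `X`. -/
theorem Finset.exists_disjoint_subsets_card_eq_of_chain [DecidableEq V] {X Y Z : Finset V}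
    (hX : #X ≤ a) (ha : a ≤ #(X ∪ Y)) (hab : a + b ≤ #(X ∪ Y ∪ Z)) :
    ∃ W₁ W₂ : Finset V, Disjoint W₁ W₂ ∧ #W₁ = a ∧ #W₂ = b ∧ W₁ ⊆ X ∪ Y ∧ W₂ ⊆ Y ∪ Z := by
  obtain ⟨W₁, hXW₁, h₁, hc₁⟩ := exists_subsuperset_card_eq subset_union_left hX ha
  have hrest : b ≤ #((X ∪ Y ∪ Z) \ W₁) := by
    rw [card_sdiff_of_subset (h₁.trans subset_union_left)]
    omega
  obtain ⟨W₂, h₂, hc₂⟩ := exists_subset_card_eq hrest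
  refine ⟨W₁, W₂, disjoint_of_subset_right h₂ disjoint_sdiff, hc₁, hc₂, h₁, fun v hv => ?_⟩
  have hv' := mem_sdiff.mp (h₂ hv)
  have : v ∉ X := fun h => hv'.2 (hXW₁ h)
  simp only [mem_union] at hv' ⊢
  tauto

end

open Function in
theorem Finset.exists_disjoint_subsets_in_two_of_five {V : Type*} [DecidableEq V]
    {D : Fin 5 → Finset V} (hD : Pairwise (Disjoint on D)) (hanti : Antitone fun i => #(D i)) :
    ∃ W₁ W₂ : Finset V, Disjoint W₁ W₂ ∧
      #W₁ = (∑ i, #(D i) + 2) / 3 ∧ #W₂ = (∑ i, #(D i) + 1) / 3 ∧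
      (∃ i j, i ≠ j ∧ W₁ ⊆ D i ∪ D j) ∧ (∃ i j, i ≠ j ∧ W₂ ⊆ D i ∪ D j) := by
  have h₁₀ : #(D 1) ≤ #(D 0) := hanti (by decide)
  have h₂₁ : #(D 2) ≤ #(D 1) := hanti (by decide)
  have h₃₂ : #(D 3) ≤ #(D 2) := hanti (by decide)
  have h₄₃ : #(D 4) ≤ #(D 3) := hanti (by decide)
  have hunion (i j : Fin 5) (hij : i ≠ j) : #(D i ∪ D j) = #(D i) + #(D j) :=
    card_union_of_disjoint (hD hij)
  obtain ⟨n, hn⟩ : ∃ n, ∑ i, #(D i) = n := ⟨_, rfl⟩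
  rw [hn]; rw [Fin.sum_univ_five] at hn
  by_cases hbig : (n + 2) / 3 < #(D 1)
  · obtain ⟨W₁, W₂, hW, hc₁, hc₂, h₁, h₂⟩ := exists_disjoint_subsets_card_eq
      (a := (n + 2) / 3) (b := (n + 1) / 3) (hD (show (0 : Fin 5) ≠ 1 by decide))
      (by omega) (by omega)
    exact ⟨W₁, W₂, hW, hc₁, hc₂, ⟨0, 1, by decide, h₁.trans subset_union_left⟩,
      ⟨0, 1, by decide, h₂.trans subset_union_right⟩⟩
  have h₁₀₂ : #(D 1 ∪ D 0 ∪ D 2) = #(D 1) + #(D 0) + #(D 2) := by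
    rw [card_union_of_disjoint, hunion 1 0 (by decide)]
    exact disjoint_union_left.mpr ⟨hD (by decide), hD (by decide)⟩
  by_cases hchain : (n + 2) / 3 + (n + 1) / 3 ≤ #(D 1 ∪ D 0 ∪ D 2)
  · obtain ⟨W₁, W₂, hW, hc₁, hc₂, h₁, h₂⟩ := exists_disjoint_subsets_card_eq_of_chain
      (b := (n + 1) / 3) (by omega) (by rw [hunion 1 0 (by decide)]; omega) hchain
    exact ⟨W₁, W₂, hW, hc₁, hc₂, ⟨1, 0, by decide, h₁⟩, ⟨0, 2, by decide, h₂⟩⟩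
  have hpools : Disjoint (D 0 ∪ D 1) (D 2 ∪ D 3) := by
    simp only [disjoint_union_left, disjoint_union_right]
    exact ⟨⟨hD (by decide), hD (by decide)⟩, hD (by decide), hD (by decide)⟩
  obtain ⟨W₁, W₂, hW, hc₁, hc₂, h₁, h₂⟩ := exists_disjoint_subsets_card_eq
    (a := (n + 2) / 3) (b := (n + 1) / 3) hpools
    (by rw [hunion 0 1 (by decide)]; omega) (by rw [hunion 2 3 (by decide)]; omega)
  exact ⟨W₁, W₂, hW, hc₁, hc₂, ⟨0, 1, by decide, h₁⟩, ⟨2, 3, by decide, h₂⟩⟩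

theorem IsAcyclicColoring.isAcyclic_induce_of_subset {V : Type*} {G : SimpleGraph V} {k : ℕ}
    {A : Fin k → Set V} (hA : IsAcyclicColoring G k A) {i j : Fin k} (hij : i ≠ j) {W : Set V}
    (hW : W ⊆ A i ∪ A j) : (G.induce W).IsAcyclic :=
  (hA.2.2.2 i j hij).embedding (G.induceHomOfLE hW)

theorem Finset.exists_equitable_complement {V : Type*} [Fintype V] [DecidableEq V]
    {W₁ W₂ : Finset V} (hW : Disjoint W₁ W₂) (h₁ : #W₁ = (Fintype.card V + 2) / 3)
    (h₂ : #W₂ = (Fintype.card V + 1) / 3) :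
    ∃ W₃ : Finset V, Disjoint W₁ W₃ ∧ Disjoint W₂ W₃ ∧ W₁ ∪ W₂ ∪ W₃ = univ ∧
      |(#W₁ : ℤ) - #W₂| ≤ 1 ∧ |(#W₁ : ℤ) - #W₃| ≤ 1 ∧ |(#W₂ : ℤ) - #W₃| ≤ 1 := by
  have h₃ : #(univ \ (W₁ ∪ W₂)) + #W₁ + #W₂ = Fintype.card V := by
    rw [add_assoc, ← card_union_of_disjoint hW, card_sdiff_add_card_eq_card (subset_univ _),
      card_univ]
  refine ⟨univ \ (W₁ ∪ W₂), disjoint_sdiff.mono_left subset_union_left,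
    disjoint_sdiff.mono_left subset_union_right, union_sdiff_of_subset (subset_univ _), ?_⟩
  refine ⟨?_, ?_, ?_⟩ <;> rw [abs_le] <;> constructor <;> omega

open Function in
theorem equitable_three_partition_two_forests_one_graph
    {V : Type*} [Fintype V] [DecidableEq V] (G : SimpleGraph V)
    (hcol : ∃ A : Fin 5 → Set V, IsAcyclicColoring G 5 A) :
    ∃ V₁ V₂ V₃ : Finset V,
      Disjoint V₁ V₂ ∧ Disjoint V₁ V₃ ∧ Disjoint V₂ V₃ ∧
      V₁ ∪ V₂ ∪ V₃ = Finset.univ ∧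
      |(V₁.card : ℤ) - (V₂.card : ℤ)| ≤ 1 ∧
      |(V₁.card : ℤ) - (V₃.card : ℤ)| ≤ 1 ∧
      |(V₂.card : ℤ) - (V₃.card : ℤ)| ≤ 1 ∧
      (G.induce (V₁ : Set V)).IsAcyclic ∧ (G.induce (V₂ : Set V)).IsAcyclic := by
  classical
  obtain ⟨A, hA⟩ := hcol
  let D : Fin 5 → Finset V := fun i => (A i).toFinset
  obtain ⟨e, he⟩ := Tuple.exists_perm_antitone_comp fun i => #(D i)
  have hD : Pairwise (Disjoint on D ∘ e) := fun i j hij =>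
    Set.disjoint_toFinset.mpr (hA.1 _ _ (e.injective.ne hij))
  obtain ⟨W₁, W₂, hW, h₁, h₂, ⟨i, j, hij, hW₁⟩, ⟨k, l, hkl, hW₂⟩⟩ :=
    exists_disjoint_subsets_in_two_of_five hD he
  have hsum : ∑ i, #((D ∘ e) i) = Fintype.card V :=
    (Equiv.sum_comp e fun i => #(D i)).trans (sum_card_toFinset_eq_card hA.1 hA.2.1)
  rw [hsum] at h₁ h₂
  obtain ⟨W₃, h₁₃, h₂₃, hcover, hb₁₂, hb₁₃, hb₂₃⟩ := exists_equitable_complement hW h₁ h₂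
  exact ⟨W₁, W₂, W₃, hW, h₁₃, h₂₃, hcover, hb₁₂, hb₁₃, hb₂₃,
    hA.isAcyclic_induce_of_subset (e.injective.ne hij) (by simpa [D] using coe_subset.mpr hW₁),
    hA.isAcyclic_induce_of_subset (e.injective.ne hkl) (by simpa [D] using coe_subset.mpr hW₂)⟩
end

section
/- Let k and ℓ be integers with 2 ≤ ℓ < k, let n be a positive integer, let q = ⌊(2n + k − ℓ)/(k + ℓ − 1)⌋ and n' = n − q. Then ⌊(2n' + k − ℓ)/(k + ℓ − 3)⌋ equals q + 1 if ⌈n − (k + ℓ − 1)q/2⌉ ≥ ℓ − 1, and equals q otherwise. Moreover n − (k + ℓ − 1)q/2 = n' − (k + ℓ − 3)q/2. -/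
/-!
Put `m = k + ℓ - 1`, `a = 2n + k - ℓ` and `r = a % m`, so that `q = a / m` and
`2n' + k - ℓ = (m - 2) q + r`. As `0 ≤ r < m ≤ 2 (m - 2)`, dividing by `m - 2` gives `q + 1`
exactly when `r ≥ m - 2`. On the other side `2n - m q = r - k + ℓ`, and
`⌈(r - k + ℓ) / 2⌉ ≥ ℓ - 1` means `r - k + ℓ > 2ℓ - 4`, which is the same condition.
-/

theorem Int.floor_intCast_div_intCast_of_pos {K : Type*} [Field K] [LinearOrder K]
    [IsStrictOrderedRing K] [FloorRing K] (a : ℤ) {b : ℤ} (hb : 0 < b) :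
    ⌊(a : K) / b⌋ = a / b := by
  lift b to ℕ using hb.le
  rw [← Rat.floor_intCast_div_natCast, ← Rat.floor_cast (α := K)]
  push_cast
  rfl

theorem Int.sub_two_mul_ediv_ediv_sub_two (a : ℤ) {m : ℤ} (hm : 4 ≤ m) :
    (a - 2 * (a / m)) / (m - 2) = a / m + if m - 2 ≤ a % m then 1 else 0 := by
  have hdecomp : a - 2 * (a / m) = a % m + (m - 2) * (a / m) := by
    linear_combination -Int.emod_add_mul_ediv a m
  have hlt : a % m < m := Int.emod_lt_of_pos a (by omega)
  have hnonneg : 0 ≤ a % m := Int.emod_nonneg a (by omega)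
  rw [hdecomp, Int.add_mul_ediv_left _ _ (by omega), add_comm]
  congr 1
  split_ifs with h
  · rw [Int.ediv_eq_iff_of_pos] <;> omega
  · exact Int.ediv_eq_zero_of_lt hnonneg (by omega)

theorem number_lemma_general (k ℓ n : ℤ) (hℓ : 2 ≤ ℓ) (hk : ℓ < k)
    (q : ℤ) (hq : q = ⌊(2 * (n : ℚ) + k - ℓ) / (k + ℓ - 1)⌋)
    (n' : ℤ) (hn' : n' = n - q) :
    (⌊(2 * (n' : ℚ) + k - ℓ) / (k + ℓ - 3)⌋ =
      if ℓ - 1 ≤ ⌈(n : ℚ) - (k + ℓ - 1) * q / 2⌉ then q + 1 else q) ∧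
    (n : ℚ) - (k + ℓ - 1) * q / 2 = (n' : ℚ) - (k + ℓ - 3) * q / 2 := by
  set a := 2 * n + k - ℓ
  set m := k + ℓ - 1
  have hm : 4 ≤ m := by omega
  have hq_int : q = a / m := by
    rw [hq, ← Int.floor_intCast_div_intCast_of_pos (K := ℚ) a (by omega : 0 < m)]
    push_cast [a, m]; rfl
  have hfloor : ⌊(2 * (n' : ℚ) + k - ℓ) / (k + ℓ - 3)⌋ = (a - 2 * (a / m)) / (m - 2) := by
    rw [← hq_int, ← Int.floor_intCast_div_intCast_of_pos (K := ℚ) _ (by omega : 0 < m - 2)]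
    push_cast [a, m, hn']; ring_nf
  have hceil : ℓ - 1 ≤ ⌈(n : ℚ) - (k + ℓ - 1) * q / 2⌉ ↔ m - 2 ≤ a % m := by
    have hmod : a % m = a - m * q := by rw [hq_int]; exact Int.emod_def a m
    have hcast : ((ℓ - 1 : ℤ) : ℚ) - 1 < n - (k + ℓ - 1) * q / 2 ↔ 2 * ℓ - 4 < 2 * n - m * q := by
      rw [← Int.cast_lt (R := ℚ)]
      push_cast [m]
      constructor <;> intro h <;> linarith
    rw [Int.le_ceil_iff, hcast, hmod]
    omega
  refine ⟨?_, by rw [hn']; push_cast; ring⟩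
  rw [hfloor, Int.sub_two_mul_ediv_ediv_sub_two a hm, ← hq_int]
  simp only [hceil]
  split_ifs <;> simp

theorem number_lemma (k ℓ n : ℤ) (hℓ : 2 ≤ ℓ) (hk : ℓ < k) (hn : 0 < n)
    (q : ℤ) (hq : q = ⌊(2 * (n : ℚ) + k - ℓ) / (k + ℓ - 1)⌋)
    (n' : ℤ) (hn' : n' = n - q) :
    (⌊(2 * (n' : ℚ) + k - ℓ) / (k + ℓ - 3)⌋ =
      if ℓ - 1 ≤ ⌈(n : ℚ) - (k + ℓ - 1) * q / 2⌉ then q + 1 else q) ∧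
    (n : ℚ) - (k + ℓ - 1) * q / 2 = (n' : ℚ) - (k + ℓ - 3) * q / 2 :=
  number_lemma_general k ℓ n hℓ hk q hq n' hn'
end

section
/- Let k > 1 be an integer, and let A_1, A_2, …, A_k be finite sets with |A_1 ∪ ⋯ ∪ A_k| = n. Then there exists a partition (B_1, …, B_{k−1}) of A_1 ∪ ⋯ ∪ A_k into k − 1 sets such that for each 1 ≤ i ≤ k − 1 the set B_i is a subset of the union of two of the sets A_1,…,A_k, and |B_i| = ⌈n/(k−1)⌉ or |B_i| = ⌊n/(k−1)⌋ for every i. -/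
open Finset

private lemma myDivHelper (b q s : ℕ) (hb : 0 < b) (hs : s < b) : (b * q + s) / b = q := by
  rw [Nat.mul_add_div hb, Nat.div_eq_of_lt hs, add_zero]

private lemma arith_helper (k n : ℕ) (hk : 2 ≤ k) :
    ((if n % k = 0 then n / k else n / k + 1) = n / k ∨
      (if n % k = 0 then n / k else n / k + 1) = (n + k - 1) / k) ∧
    ((n - (if n % k = 0 then n / k else n / k + 1)) / (k - 1) = n / k ∨
      (n - (if n % k = 0 then n / k else n / k + 1)) / (k - 1) = (n + k - 1) / k) ∧
    ((n - (if n % k = 0 then n / k else n / k + 1) + (k - 1) - 1) / (k - 1) = n / k ∨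
      (n - (if n % k = 0 then n / k else n / k + 1) + (k - 1) - 1) / (k - 1) = (n + k - 1) / k) ∧
    n ≤ k * (if n % k = 0 then n / k else n / k + 1) ∧
    k * (if n % k = 0 then n / k else n / k + 1) ≤ n + (k - 1) := by
  obtain ⟨q, hq⟩ : ∃ q, n / k = q := ⟨_, rfl⟩
  obtain ⟨r, hr⟩ : ∃ r, n % k = r := ⟨_, rfl⟩
  have hn : n = k * q + r := by rw [← hq, ← hr]; exact (Nat.div_add_mod n k).symm
  have hrk : r < k := hr ▸ Nat.mod_lt n (by omega)
  have hkq : (k - 1) * q + q = k * q := by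
    have h1 : (k - 1) * q = k * q - q := by rw [Nat.sub_one_mul]
    have h2 : q ≤ k * q := Nat.le_mul_of_pos_left q (by omega)
    omega
  simp only [hq, hr]
  by_cases h0 : r = 0
  · simp only [if_pos h0]
    have hceil : (n + k - 1) / k = q := by
      have e : n + k - 1 = k * q + (k - 1) := by omega
      rw [e, myDivHelper k q (k - 1) (by omega) (by omega)]
    have h1 : (n - q) / (k - 1) = q := by
      have e : n - q = (k - 1) * q + 0 := by omega
      rw [e, myDivHelper (k - 1) q 0 (by omega) (by omega)]
    have h2 : (n - q + (k - 1) - 1) / (k - 1) = q := by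
      have e : n - q + (k - 1) - 1 = (k - 1) * q + (k - 2) := by omega
      rw [e, myDivHelper (k - 1) q (k - 2) (by omega) (by omega)]
    refine ⟨?_, Or.inl h1, Or.inl h2, by omega, by omega⟩
    simp
  · simp only [if_neg h0]
    have hr1 : 1 ≤ r := by omega
    have hk1 : k * (q + 1) = k * q + k := by ring
    have hceil : (n + k - 1) / k = q + 1 := by
      have e : n + k - 1 = k * (q + 1) + (r - 1) := by omega
      rw [e, myDivHelper k (q + 1) (r - 1) (by omega) (by omega)]
    have h1 : (n - (q + 1)) / (k - 1) = q := by
      have e : n - (q + 1) = (k - 1) * q + (r - 1) := by omega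
      rw [e, myDivHelper (k - 1) q (r - 1) (by omega) (by omega)]
    have h2 : (n - (q + 1) + (k - 1) - 1) / (k - 1) = q ∨
        (n - (q + 1) + (k - 1) - 1) / (k - 1) = q + 1 := by
      by_cases hr2 : r = 1
      · left
        have e : n - (q + 1) + (k - 1) - 1 = (k - 1) * q + (k - 2) := by omega
        rw [e, myDivHelper (k - 1) q (k - 2) (by omega) (by omega)]
      · right
        have hk2 : (k - 1) * (q + 1) = (k - 1) * q + (k - 1) := by ring
        have e : n - (q + 1) + (k - 1) - 1 = (k - 1) * (q + 1) + (r - 2) := by omega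
        rw [e, myDivHelper (k - 1) (q + 1) (r - 2) (by omega) (by omega)]
    refine ⟨Or.inr hceil.symm, Or.inl h1, ?_, by omega, by omega⟩
    rcases h2 with h2 | h2
    · exact Or.inl h2
    · exact Or.inr (by rw [h2, hceil])

private lemma carve_lemma {α : Type*} [DecidableEq α] {m : ℕ} (hm : 2 ≤ m)
    (A : Fin m → Finset α) (t : ℕ)
    (H1 : (Finset.univ.biUnion A).card ≤ (m - 1) * t)
    (H2 : (m - 1) * t ≤ (Finset.univ.biUnion A).card + (m - 2)) :
    ∃ (C : Finset α) (i j : Fin m), i ≠ j ∧ C ⊆ A i ∪ A j ∧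
      C ⊆ Finset.univ.biUnion A ∧ C.card = t ∧
      ∀ x ∈ Finset.univ.biUnion A, x ∉ C → ∃ l, l ≠ i ∧ x ∈ A l := by
  have hm0 : 0 < m := by omega
  set P : Fin m → Finset α := fun i => A i \ (Finset.univ.erase i).biUnion A with hP
  have hPdisj : ∀ i ∈ (univ : Finset (Fin m)), ∀ j ∈ univ, i ≠ j → Disjoint (P i) (P j) := by
    intro i _ j _ hij
    rw [Finset.disjoint_left]
    intro x hxi hxj
    simp only [hP, Finset.mem_sdiff, Finset.mem_biUnion, Finset.mem_erase] at hxi hxj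
    exact hxi.2 ⟨j, ⟨Ne.symm hij, mem_univ j⟩, hxj.1⟩
  have hPsubU : ∀ i, P i ⊆ Finset.univ.biUnion A := by
    intro i
    exact (sdiff_subset).trans (subset_biUnion_of_mem A (mem_univ i))
  have hsum : ∑ i, (P i).card ≤ (Finset.univ.biUnion A).card := by
    rw [← Finset.card_biUnion hPdisj]
    exact Finset.card_le_card (Finset.biUnion_subset.mpr fun i _ => hPsubU i)
  obtain ⟨i, _, hmin⟩ := Finset.exists_min_image univ (fun i => (P i).card)
    ⟨⟨0, hm0⟩, mem_univ _⟩
  have hsmul : m * (P i).card ≤ ∑ j, (P j).card := by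
    have := Finset.card_nsmul_le_sum univ (fun j => (P j).card) ((P i).card)
      (fun j _ => hmin j (mem_univ j))
    simpa [Finset.card_univ, smul_eq_mul] using this
  have hPit : (P i).card ≤ t := by
    have h1 : m * (P i).card ≤ m * t := by
      calc m * (P i).card ≤ (Finset.univ.biUnion A).card := le_trans hsmul hsum
        _ ≤ (m - 1) * t := H1
        _ ≤ m * t := Nat.mul_le_mul_right t (by omega)
    exact Nat.le_of_mul_le_mul_left h1 hm0
  have hAiU : A i ⊆ Finset.univ.biUnion A := subset_biUnion_of_mem A (mem_univ i)
  have hexne : ∃ j : Fin m, j ≠ i := by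
    rcases Nat.lt_or_ge 0 i.val with h | h
    · exact ⟨⟨0, hm0⟩, by intro he; rw [Fin.ext_iff] at he; simp at he; omega⟩
    · exact ⟨⟨1, by omega⟩, by intro he; rw [Fin.ext_iff] at he; simp at he; omega⟩
  by_cases hcase : t ≤ (A i).card
  · obtain ⟨j0, hj0⟩ := hexne
    obtain ⟨C, hPC, hCA, hCcard⟩ :=
      Finset.exists_subsuperset_card_eq (sdiff_subset : P i ⊆ A i) hPit hcase
    refine ⟨C, i, j0, Ne.symm hj0, hCA.trans subset_union_left, hCA.trans hAiU, hCcard, ?_⟩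
    intro x hxU hxC
    by_cases hxAi : x ∈ A i
    · have hxP : x ∉ P i := fun hp => hxC (hPC hp)
      simp only [hP, Finset.mem_sdiff, Finset.mem_biUnion, Finset.mem_erase] at hxP
      push_neg at hxP
      obtain ⟨l, ⟨hl, _⟩, hxl⟩ := hxP hxAi
      exact ⟨l, hl, hxl⟩
    · obtain ⟨l, _, hxl⟩ := Finset.mem_biUnion.mp hxU
      exact ⟨l, fun he => hxAi (he ▸ hxl), hxl⟩
  · -- card (A i) < t
    have hat : (A i).card + 1 ≤ t := by omega
    have key : ∃ j, j ≠ i ∧ t - (A i).card ≤ (A j \ A i).card := by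
      by_contra hcon
      push_neg at hcon
      have hcover : Finset.univ.biUnion A ⊆
          A i ∪ (Finset.univ.erase i).biUnion (fun j => A j \ A i) := by
        intro x hx
        obtain ⟨l, _, hxl⟩ := Finset.mem_biUnion.mp hx
        by_cases hxi : x ∈ A i
        · exact Finset.mem_union_left _ hxi
        · refine Finset.mem_union_right _ (Finset.mem_biUnion.mpr ⟨l, ?_, ?_⟩)
          · exact Finset.mem_erase.mpr ⟨fun he => hxi (he ▸ hxl), mem_univ l⟩
          · exact Finset.mem_sdiff.mpr ⟨hxl, hxi⟩
      have hcard : (Finset.univ.biUnion A).card ≤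
          (A i).card + ∑ j ∈ univ.erase i, (A j \ A i).card := by
        calc (Finset.univ.biUnion A).card
            ≤ (A i ∪ (Finset.univ.erase i).biUnion (fun j => A j \ A i)).card :=
              Finset.card_le_card hcover
          _ ≤ (A i).card + ((Finset.univ.erase i).biUnion (fun j => A j \ A i)).card :=
              Finset.card_union_le _ _
          _ ≤ (A i).card + ∑ j ∈ univ.erase i, (A j \ A i).card :=
              Nat.add_le_add_left (Finset.card_biUnion_le) _
      have hbound : ∑ j ∈ univ.erase i, (A j \ A i).card
          ≤ (m - 1) * (t - (A i).card - 1) := by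
        have := Finset.sum_le_card_nsmul (univ.erase i) (fun j => (A j \ A i).card)
          (t - (A i).card - 1) (fun j hj =>
            Nat.le_sub_one_of_lt (hcon j (Finset.mem_erase.mp hj).1))
        have hce : (univ.erase i).card = m - 1 := by
          rw [Finset.card_erase_of_mem (mem_univ i), Finset.card_univ, Fintype.card_fin]
        rw [hce] at this
        simpa [smul_eq_mul] using this
      have h6 : (Finset.univ.biUnion A).card ≤
          (A i).card + (m - 1) * (t - (A i).card - 1) :=
        le_trans hcard (Nat.add_le_add_left hbound _)
      have h5 : (m - 1) * (A i).card + (m - 1) + (m - 1) * (t - (A i).card - 1)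
          ≤ (Finset.univ.biUnion A).card + (m - 2) := by
        refine le_trans (le_of_eq ?_) H2
        have ht' : t = (A i).card + 1 + (t - (A i).card - 1) := by omega
        calc (m - 1) * (A i).card + (m - 1) + (m - 1) * (t - (A i).card - 1)
            = (m - 1) * ((A i).card + 1 + (t - (A i).card - 1)) := by ring
          _ = (m - 1) * t := by rw [← ht']
      have hge : (A i).card ≤ (m - 1) * (A i).card :=
        Nat.le_mul_of_pos_left _ (by omega)
      -- linear contradiction over the atoms X := (m-1)*(A i).card, Y := (m-1)*(t - ...)
      generalize hX : (m - 1) * (A i).card = X at h5 hge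
      generalize hY : (m - 1) * (t - (A i).card - 1) = Y at h5 h6
      omega
    obtain ⟨j, hji, hjcard⟩ := key
    obtain ⟨S, hSsub, hScard⟩ := Finset.exists_subset_card_eq hjcard
    have hSdisj : Disjoint (A i) S := by
      rw [Finset.disjoint_right]
      intro x hxS
      exact (Finset.mem_sdiff.mp (hSsub hxS)).2
    refine ⟨A i ∪ S, i, j, Ne.symm hji, ?_, ?_, ?_, ?_⟩
    · exact Finset.union_subset_union (le_refl _) (hSsub.trans sdiff_subset)
    · exact Finset.union_subset hAiU
        ((hSsub.trans sdiff_subset).trans (subset_biUnion_of_mem A (mem_univ j)))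
    · rw [Finset.card_union_of_disjoint hSdisj, hScard]; omega
    · intro x hxU hxC
      have hxAi : x ∉ A i := fun h => hxC (Finset.mem_union_left _ h)
      obtain ⟨l, _, hxl⟩ := Finset.mem_biUnion.mp hxU
      exact ⟨l, fun he => hxAi (he ▸ hxl), hxl⟩

private lemma aux_equitable {α : Type*} [DecidableEq α] :
    ∀ k : ℕ, 2 ≤ k → ∀ A : Fin k → Finset α,
    ∃ B : Fin (k - 1) → Finset α,
      (∀ i j, i ≠ j → Disjoint (B i) (B j)) ∧
      Finset.univ.biUnion B = Finset.univ.biUnion A ∧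
      (∀ i, ∃ a b : Fin k, a ≠ b ∧ B i ⊆ A a ∪ A b) ∧
      (∀ i, (B i).card = (Finset.univ.biUnion A).card / (k - 1) ∨
            (B i).card = ((Finset.univ.biUnion A).card + (k - 1) - 1) / (k - 1)) := by
  intro k hk
  induction k, hk using Nat.le_induction with
  | base =>
    intro A
    refine ⟨fun _ => Finset.univ.biUnion A, ?_, ?_, ?_, ?_⟩
    · intro i j hij
      exfalso
      apply hij
      have h1 := i.isLt
      have h2 := j.isLt
      exact Fin.ext (by omega)
    · simp
    · intro _
      refine ⟨0, 1, by decide, ?_⟩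
      intro x hx
      obtain ⟨l, _, hxl⟩ := Finset.mem_biUnion.mp hx
      fin_cases l
      · exact Finset.mem_union_left _ hxl
      · exact Finset.mem_union_right _ hxl
    · intro _
      left
      simp
  | succ k hk ih =>
    intro A
    obtain ⟨htval, hfloor', hceil', H1, H2⟩ :=
      arith_helper k (Finset.univ.biUnion A).card hk
    set n := (Finset.univ.biUnion A).card with hn
    set t := if n % k = 0 then n / k else n / k + 1 with ht
    have hcarve := carve_lemma (m := k + 1) (by omega) A t H1 H2
    obtain ⟨C, i, j, hij, hCij, hCU, hCcard, hcover⟩ := hcarve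
    set A' : Fin k → Finset α := fun l => A (i.succAbove l) \ C with hA'
    have hA'U : Finset.univ.biUnion A' = Finset.univ.biUnion A \ C := by
      ext x
      constructor
      · intro hx
        obtain ⟨l, -, hl⟩ := Finset.mem_biUnion.mp hx
        simp only [hA'] at hl
        obtain ⟨hl1, hl2⟩ := Finset.mem_sdiff.mp hl
        exact Finset.mem_sdiff.mpr
          ⟨subset_biUnion_of_mem A (mem_univ (i.succAbove l)) hl1, hl2⟩
      · intro hx
        obtain ⟨hxU, hxC⟩ := Finset.mem_sdiff.mp hx
        obtain ⟨l, hli, hxl⟩ := hcover x hxU hxC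
        obtain ⟨z, hz⟩ := Fin.exists_succAbove_eq hli
        refine Finset.mem_biUnion.mpr ⟨z, mem_univ _, ?_⟩
        simp only [hA']
        rw [← hz] at hxl
        exact Finset.mem_sdiff.mpr ⟨hxl, hxC⟩
    have hn' : (Finset.univ.biUnion A').card = n - t := by
      rw [hA'U, Finset.card_sdiff_of_subset hCU, hCcard, ← hn]
    obtain ⟨B', hB'disj, hB'union, hB'two, hB'size⟩ := ih A'
    set B : Fin (k + 1 - 1) → Finset α :=
      fun l => if h : (l : ℕ) < k - 1 then B' ⟨l, h⟩ else C with hB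
    have hB'subUC : ∀ x, B' x ⊆ Finset.univ.biUnion A \ C := by
      intro x
      refine (subset_biUnion_of_mem B' (mem_univ x)).trans ?_
      rw [hB'union, hA'U]
    refine ⟨B, ?_, ?_, ?_, ?_⟩
    · -- disjointness
      intro l1 l2 hne
      by_cases h1 : (l1 : ℕ) < k - 1 <;> by_cases h2 : (l2 : ℕ) < k - 1
      · simp only [hB]
        rw [dif_pos h1, dif_pos h2]
        apply hB'disj
        intro he
        apply hne
        rw [Fin.ext_iff] at he ⊢
        simpa using he
      · simp only [hB]
        rw [dif_pos h1, dif_neg h2]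
        exact Finset.disjoint_of_subset_left (hB'subUC _) (Finset.sdiff_disjoint)
      · simp only [hB]
        rw [dif_neg h1, dif_pos h2]
        exact Finset.disjoint_of_subset_right (hB'subUC _) (Finset.sdiff_disjoint.symm)
      · exfalso
        apply hne
        rw [Fin.ext_iff]
        have e1 := l1.isLt
        have e2 := l2.isLt
        omega
    · -- union
      ext x
      constructor
      · intro hx
        obtain ⟨l, -, hl⟩ := Finset.mem_biUnion.mp hx
        simp only [hB] at hl
        by_cases h : (l : ℕ) < k - 1
        · rw [dif_pos h] at hl
          exact (Finset.mem_sdiff.mp (hB'subUC _ hl)).1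
        · rw [dif_neg h] at hl
          exact hCU hl
      · intro hxU
        apply Finset.mem_biUnion.mpr
        by_cases hxC : x ∈ C
        · refine ⟨⟨k - 1, by omega⟩, mem_univ _, ?_⟩
          simp only [hB]
          rw [dif_neg (by simp)]
          exact hxC
        · have hx' : x ∈ Finset.univ.biUnion B' := by
            rw [hB'union, hA'U]
            exact Finset.mem_sdiff.mpr ⟨hxU, hxC⟩
          obtain ⟨l', _, hxl'⟩ := Finset.mem_biUnion.mp hx'
          refine ⟨⟨l'.val, by have := l'.isLt; omega⟩, mem_univ _, ?_⟩
          simp only [hB]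
          rw [dif_pos l'.isLt]
          simpa using hxl'
    · -- two sets
      intro l
      by_cases h : (l : ℕ) < k - 1
      · obtain ⟨a, b, hab, hsub⟩ := hB'two ⟨l, h⟩
        refine ⟨i.succAbove a, i.succAbove b, ?_, ?_⟩
        · exact fun he => hab (Fin.succAbove_right_injective he)
        · simp only [hB]
          rw [dif_pos h]
          refine hsub.trans ?_
          simp only [hA']
          exact Finset.union_subset_union sdiff_subset sdiff_subset
      · refine ⟨i, j, hij, ?_⟩
        simp only [hB]
        rw [dif_neg h]
        exact hCij
    · -- sizes
      intro l
      simp only [hB, Nat.add_sub_cancel]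
      by_cases h : (l : ℕ) < k - 1
      · rw [dif_pos h]
        have hsz := hB'size ⟨l, h⟩
        rw [hn'] at hsz
        rcases hsz with h' | h'
        · rw [h']; exact hfloor'
        · rw [h']; exact hceil'
      · rw [dif_neg h]
        rw [hCcard]
        exact htval

theorem equitable_partition_from_k_sets
    {α : Type*} [DecidableEq α] (k : ℕ) (hk : 1 < k)
    (A : Fin k → Finset α) (n : ℕ) (hn : (Finset.univ.biUnion A).card = n) :
    ∃ B : Fin (k - 1) → Finset α,
      (∀ i j, i ≠ j → Disjoint (B i) (B j)) ∧
      Finset.univ.biUnion B = Finset.univ.biUnion A ∧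
      (∀ i, ∃ a b : Fin k, a ≠ b ∧ B i ⊆ A a ∪ A b) ∧
      (∀ i, (B i).card = n / (k - 1) ∨ (B i).card = (n + (k - 1) - 1) / (k - 1)) := by
  subst hn
  exact aux_equitable k hk A
end

section
/- If a finite simple graph G on n vertices admits an acyclic 5-coloring, then there exists a partition (B_0, B_1, B_2) of V(G) such that the induced subgraphs G[B_1] and G[B_2] are forests and |B_1| ≥ ⌊(n+1)/3⌋ and |B_2| ≥ ⌊(n+1)/3⌋. -/
open SimpleGraph

set_option maxHeartbeats 1000000

/-- Acyclicity is inherited by induced subgraphs on smaller vertex sets. -/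
lemma isAcyclic_induce_mono {V : Type*} (G : SimpleGraph V) {T S : Set V} (hTS : T ⊆ S)
    (h : (G.induce S).IsAcyclic) : (G.induce T).IsAcyclic := by
  intro v c hc
  have hmaps : Set.MapsTo (Hom.id : G →g G) T S := fun x hx => hTS hx
  have hinj : Function.Injective (induceHom (Hom.id : G →g G) hmaps) :=
    induceHom_injective (Hom.id : G →g G) hmaps (Set.injOn_id _)
  exact h (c.map (induceHom (Hom.id : G →g G) hmaps)) (hc.map hinj)

theorem two_large_forests_from_acyclic_five_coloring
    {V : Type*} [Fintype V] [DecidableEq V] (G : SimpleGraph V)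
    (n : ℕ) (hn : Fintype.card V = n)
    (hcol : ∃ A : Fin 5 → Set V, IsAcyclicColoring G 5 A) :
    ∃ B₀ B₁ B₂ : Finset V,
      Disjoint B₀ B₁ ∧ Disjoint B₀ B₂ ∧ Disjoint B₁ B₂ ∧
      B₀ ∪ B₁ ∪ B₂ = Finset.univ ∧
      (G.induce (B₁ : Set V)).IsAcyclic ∧ (G.induce (B₂ : Set V)).IsAcyclic ∧
      (n + 1) / 3 ≤ B₁.card ∧ (n + 1) / 3 ≤ B₂.card := by
  obtain ⟨A, hdisj, hcover, hind, hforest⟩ := hcol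
  set m := (n + 1) / 3 with hm
  have hAfin : ∀ i, (A i).Finite := fun i => Set.toFinite _
  set F : Fin 5 → Finset V := fun i => (hAfin i).toFinset with hF
  have hFcoe : ∀ i, (F i : Set V) = A i := fun i => Set.Finite.coe_toFinset _
  have hFmem : ∀ i x, x ∈ F i ↔ x ∈ A i := fun i x => Set.Finite.mem_toFinset _
  have hFdisj : ∀ i j, i ≠ j → Disjoint (F i) (F j) := by
    intro i j hij
    rw [← Finset.disjoint_coe, hFcoe, hFcoe]
    exact hdisj i j hij
  have hcov : ∀ x : V, ∃ i, x ∈ F i := by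
    intro x
    have : x ∈ ⋃ i, A i := hcover ▸ Set.mem_univ x
    obtain ⟨i, hi⟩ := Set.mem_iUnion.mp this
    exact ⟨i, (hFmem i x).mpr hi⟩
  -- sum of the class sizes is n
  have hsum : ∑ i, (F i).card = n := by
    have hb : Finset.univ.biUnion F = (Finset.univ : Finset V) := by
      ext x
      simp only [Finset.mem_biUnion, Finset.mem_univ, true_and, iff_true]
      exact hcov x
    calc ∑ i, (F i).card = (Finset.univ.biUnion F).card :=
          (Finset.card_biUnion (fun i _ j _ hij => hFdisj i j hij)).symm
      _ = n := by rw [hb, Finset.card_univ, hn]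
  -- sort the classes by size
  set σ := Tuple.sort (fun i => (F i).card) with hσ
  have hmono := Tuple.monotone_sort (fun i => (F i).card)
  set b : Fin 5 → ℕ := fun i => (F (σ i)).card with hb
  have hb01 : b 0 ≤ b 1 := hmono (by decide : (0 : Fin 5) ≤ 1)
  have hb12 : b 1 ≤ b 2 := hmono (by decide : (1 : Fin 5) ≤ 2)
  have hb23 : b 2 ≤ b 3 := hmono (by decide : (2 : Fin 5) ≤ 3)
  have hb34 : b 3 ≤ b 4 := hmono (by decide : (3 : Fin 5) ≤ 4)
  have hbsum : b 0 + b 1 + b 2 + b 3 + b 4 = n := by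
    have := Equiv.sum_comp σ (fun i => (F i).card)
    rw [hsum] at this
    rw [← this]
    simp [hb, Fin.sum_univ_five]
  have hσne : ∀ i j : Fin 5, i ≠ j → σ i ≠ σ j := fun i j hij h => hij (σ.injective h)
  -- the key arithmetic disjunction
  have hkey : (b 4 + b 3 + b 2 ≥ 2 * m ∧ b 4 + b 3 ≥ m ∧ b 4 + b 2 ≥ m) ∨
      (b 4 + b 1 ≥ m ∧ b 3 + b 2 ≥ m) := by omega
  -- coverage by the sorted classes
  have hcovσ : ∀ x : V, x ∈ F (σ 0) ∨ x ∈ F (σ 1) ∨ x ∈ F (σ 2) ∨ x ∈ F (σ 3) ∨ x ∈ F (σ 4) := by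
    intro x
    obtain ⟨i, hi⟩ := hcov x
    obtain ⟨j, rfl⟩ : ∃ j, σ j = i := ⟨σ.symm i, σ.apply_symm_apply i⟩
    fin_cases j <;> tauto
  rcases hkey with ⟨h2m, h43, h42⟩ | ⟨h41, h32⟩
  · -- shared strategy: split the largest class F (σ 4)
    obtain ⟨S, hSsub, hScard⟩ := Finset.exists_subset_card_eq
      (show m - b 3 ≤ (F (σ 4)).card by change _ ≤ b 4; omega)
    refine ⟨F (σ 1) ∪ F (σ 0), F (σ 3) ∪ S, F (σ 2) ∪ (F (σ 4) \ S), ?_, ?_, ?_, ?_, ?_, ?_, ?_, ?_⟩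
    · have h1 : Disjoint (F (σ 1) ∪ F (σ 0)) (F (σ 4)) := by
        refine Finset.disjoint_union_left.mpr ⟨hFdisj _ _ (hσne _ _ (by decide)),
          hFdisj _ _ (hσne _ _ (by decide))⟩
      exact Finset.disjoint_union_right.mpr
        ⟨Finset.disjoint_union_left.mpr ⟨hFdisj _ _ (hσne _ _ (by decide)),
          hFdisj _ _ (hσne _ _ (by decide))⟩, h1.mono_right hSsub⟩
    · refine Finset.disjoint_union_right.mpr
        ⟨Finset.disjoint_union_left.mpr ⟨hFdisj _ _ (hσne _ _ (by decide)),
          hFdisj _ _ (hσne _ _ (by decide))⟩, ?_⟩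
      refine Finset.disjoint_union_left.mpr
        ⟨(hFdisj _ _ (hσne _ _ (by decide))).mono_right Finset.sdiff_subset,
          (hFdisj _ _ (hσne _ _ (by decide))).mono_right Finset.sdiff_subset⟩
    · refine Finset.disjoint_union_right.mpr ⟨Finset.disjoint_union_left.mpr
        ⟨hFdisj _ _ (hσne _ _ (by decide)),
         (hFdisj _ _ (hσne _ _ (by decide))).symm.mono_left hSsub⟩, ?_⟩
      exact Finset.disjoint_union_left.mpr
        ⟨(hFdisj _ _ (hσne _ _ (by decide))).mono_right Finset.sdiff_subset,
          Finset.disjoint_sdiff⟩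
    · ext x
      simp only [Finset.mem_union, Finset.mem_sdiff, Finset.mem_univ, iff_true]
      rcases hcovσ x with h | h | h | h | h
      · tauto
      · tauto
      · tauto
      · tauto
      · by_cases hxS : x ∈ S <;> tauto
    · apply isAcyclic_induce_mono G (S := A (σ 3) ∪ A (σ 4))
      · intro x hx
        rcases Finset.mem_union.mp (by exact_mod_cast hx) with h | h
        · exact Or.inl ((hFmem _ x).mp h)
        · exact Or.inr ((hFmem _ x).mp (hSsub h))
      · exact hforest _ _ (hσne _ _ (by decide))
    · apply isAcyclic_induce_mono G (S := A (σ 2) ∪ A (σ 4))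
      · intro x hx
        rcases Finset.mem_union.mp (by exact_mod_cast hx) with h | h
        · exact Or.inl ((hFmem _ x).mp h)
        · exact Or.inr ((hFmem _ x).mp (Finset.mem_sdiff.mp h).1)
      · exact hforest _ _ (hσne _ _ (by decide))
    · have hdS : Disjoint (F (σ 3)) S :=
        (hFdisj _ _ (hσne _ _ (by decide))).mono_right hSsub
      rw [Finset.card_union_of_disjoint hdS, hScard]
      change m ≤ b 3 + (m - b 3)
      omega
    · have hdS : Disjoint (F (σ 2)) (F (σ 4) \ S) :=
        (hFdisj _ _ (hσne _ _ (by decide))).mono_right Finset.sdiff_subset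
      rw [Finset.card_union_of_disjoint hdS, Finset.card_sdiff_of_subset hSsub, hScard]
      change m ≤ b 2 + (b 4 - (m - b 3))
      omega
  · -- disjoint pairs strategy
    refine ⟨F (σ 0), F (σ 4) ∪ F (σ 1), F (σ 3) ∪ F (σ 2), ?_, ?_, ?_, ?_, ?_, ?_, ?_, ?_⟩
    · exact Finset.disjoint_union_right.mpr ⟨hFdisj _ _ (hσne _ _ (by decide)),
        hFdisj _ _ (hσne _ _ (by decide))⟩
    · exact Finset.disjoint_union_right.mpr ⟨hFdisj _ _ (hσne _ _ (by decide)),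
        hFdisj _ _ (hσne _ _ (by decide))⟩
    · refine Finset.disjoint_union_right.mpr ⟨?_, ?_⟩ <;>
        refine Finset.disjoint_union_left.mpr ⟨hFdisj _ _ (hσne _ _ (by decide)),
          hFdisj _ _ (hσne _ _ (by decide))⟩
    · ext x
      simp only [Finset.mem_union, Finset.mem_univ, iff_true]
      rcases hcovσ x with h | h | h | h | h <;> tauto
    · have hcoe : ((F (σ 4) ∪ F (σ 1) : Finset V) : Set V) = A (σ 4) ∪ A (σ 1) := by
        rw [Finset.coe_union, hFcoe, hFcoe]
      rw [hcoe]
      exact hforest _ _ (hσne _ _ (by decide))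
    · have hcoe : ((F (σ 3) ∪ F (σ 2) : Finset V) : Set V) = A (σ 3) ∪ A (σ 2) := by
        rw [Finset.coe_union, hFcoe, hFcoe]
      rw [hcoe]
      exact hforest _ _ (hσne _ _ (by decide))
    · rw [Finset.card_union_of_disjoint (hFdisj _ _ (hσne _ _ (by decide)))]
      exact h41
    · rw [Finset.card_union_of_disjoint (hFdisj _ _ (hσne _ _ (by decide)))]
      exact h32
end

section
/- If a finite simple graph G admits an acyclic 4-coloring, then G admits an equitable 3-partition (V_1, V_2, V_3) of its vertex set such that each induced subgraph G[V_i] is a forest. -/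
open SimpleGraph

/-- Acyclicity passes to induced subgraphs on smaller vertex sets. -/
lemma acyclic_of_subset {V : Type*} (G : SimpleGraph V) {s t : Set V} (hst : s ⊆ t)
    (ht : (G.induce t).IsAcyclic) : (G.induce s).IsAcyclic := by
  intro v c hc
  let φ : G.induce s →g G.induce t :=
    ⟨Set.inclusion hst, fun {a b} hab => hab⟩
  have hinj : Function.Injective φ := Set.inclusion_injective hst
  exact ht (c.map φ) (hc.map hinj)

set_option maxHeartbeats 4000000 in
theorem equitable_three_partition_into_forests_of_acyclic_four_colorable
    {V : Type*} [Fintype V] [DecidableEq V] (G : SimpleGraph V)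
    (hcol : ∃ A : Fin 4 → Set V, IsAcyclicColoring G 4 A) :
    ∃ V₁ V₂ V₃ : Finset V,
      Disjoint V₁ V₂ ∧ Disjoint V₁ V₃ ∧ Disjoint V₂ V₃ ∧
      V₁ ∪ V₂ ∪ V₃ = Finset.univ ∧
      |(V₁.card : ℤ) - (V₂.card : ℤ)| ≤ 1 ∧
      |(V₁.card : ℤ) - (V₃.card : ℤ)| ≤ 1 ∧
      |(V₂.card : ℤ) - (V₃.card : ℤ)| ≤ 1 ∧
      (G.induce (V₁ : Set V)).IsAcyclic ∧ (G.induce (V₂ : Set V)).IsAcyclic ∧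
      (G.induce (V₃ : Set V)).IsAcyclic := by
  classical
  obtain ⟨A, hdisj, hcover, hind, hfor⟩ := hcol
  -- color classes as finsets
  set S : Fin 4 → Finset V := fun i => (A i).toFinset with hSdef
  have hS : ∀ i, (S i : Set V) = A i := fun i => Set.coe_toFinset _
  have hSdisj : ∀ i j : Fin 4, i ≠ j → Disjoint (S i) (S j) := by
    intro i j hij
    rw [← Finset.disjoint_coe, hS, hS]
    exact hdisj i j hij
  have hmem : ∀ v : V, ∃ i, v ∈ S i := by
    intro v
    have hv : v ∈ ⋃ i, A i := by rw [hcover]; trivial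
    obtain ⟨i, hi⟩ := Set.mem_iUnion.mp hv
    exact ⟨i, Set.mem_toFinset.mpr hi⟩
  -- sort the classes by cardinality, descending
  set σ := Tuple.sort (fun i => (S i).card) with hσdef
  have hmono := Tuple.monotone_sort (fun i => (S i).card)
  have hne : ∀ i j : Fin 4, i ≠ j → σ i ≠ σ j := fun i j hij h => hij (σ.injective h)
  set P := S (σ 3) with hP
  set Q := S (σ 2) with hQ
  set R := S (σ 1) with hR
  set W := S (σ 0) with hW
  have hab : Q.card ≤ P.card := hmono (show (2 : Fin 4) ≤ 3 by decide)
  have hbc : R.card ≤ Q.card := hmono (show (1 : Fin 4) ≤ 2 by decide)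
  have hcd : W.card ≤ R.card := hmono (show (0 : Fin 4) ≤ 1 by decide)
  -- the four sorted classes partition the vertex set
  have hunion : P ∪ (Q ∪ (R ∪ W)) = Finset.univ := by
    apply Finset.eq_univ_iff_forall.mpr
    intro v
    obtain ⟨i, hi⟩ := hmem v
    obtain ⟨k, hk⟩ : ∃ k, v ∈ S (σ k) := ⟨σ.symm i, by rwa [Equiv.apply_symm_apply]⟩
    fin_cases k
    · exact Finset.mem_union_right _ (Finset.mem_union_right _ (Finset.mem_union_right _ hk))
    · exact Finset.mem_union_right _ (Finset.mem_union_right _ (Finset.mem_union_left _ hk))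
    · exact Finset.mem_union_right _ (Finset.mem_union_left _ hk)
    · exact Finset.mem_union_left _ hk
  have dPQ : Disjoint P Q := hSdisj _ _ (hne 3 2 (by decide))
  have dPR : Disjoint P R := hSdisj _ _ (hne 3 1 (by decide))
  have dPW : Disjoint P W := hSdisj _ _ (hne 3 0 (by decide))
  have dQR : Disjoint Q R := hSdisj _ _ (hne 2 1 (by decide))
  have dQW : Disjoint Q W := hSdisj _ _ (hne 2 0 (by decide))
  have dRW : Disjoint R W := hSdisj _ _ (hne 1 0 (by decide))
  have hsum : P.card + Q.card + R.card + W.card = Fintype.card V := by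
    have e1 : (R ∪ W).card = R.card + W.card := Finset.card_union_of_disjoint dRW
    have e2 : (Q ∪ (R ∪ W)).card = Q.card + (R.card + W.card) := by
      rw [Finset.card_union_of_disjoint (Finset.disjoint_union_right.mpr ⟨dQR, dQW⟩), e1]
    have e3 : (P ∪ (Q ∪ (R ∪ W))).card = P.card + (Q.card + (R.card + W.card)) := by
      rw [Finset.card_union_of_disjoint
        (Finset.disjoint_union_right.mpr ⟨dPQ, Finset.disjoint_union_right.mpr ⟨dPR, dPW⟩⟩), e2]
    rw [hunion, Finset.card_univ] at e3
    omega
  -- targets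
  obtain ⟨t1, t2, t3, hts, h12, h23, h131⟩ :
      ∃ t1 t2 t3 : ℕ, t1 + t2 + t3 = Fintype.card V ∧ t2 ≤ t1 ∧ t3 ≤ t2 ∧ t1 ≤ t3 + 1 :=
    ⟨(Fintype.card V + 2) / 3, (Fintype.card V + 1) / 3, Fintype.card V / 3,
      by omega, by omega, by omega, by omega⟩
  -- a part contained in the union of two distinct classes induces a forest
  have hforest : ∀ (B : Finset V) (i j : Fin 4), i ≠ j → B ⊆ S i ∪ S j →
      (G.induce (B : Set V)).IsAcyclic := by
    intro B i j hij hsub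
    refine acyclic_of_subset G ?_ (hfor i j hij)
    rw [← hS, ← hS, ← Finset.coe_union]
    exact Finset.coe_subset.mpr hsub
  by_cases hb : Q.card ≤ t1
  · -- Case I: star around the largest class P
    obtain ⟨X1, hX1P, hX1⟩ := Finset.exists_subset_card_eq
      (show t1 - Q.card ≤ P.card by omega)
    have hPX1 : (P \ X1).card = P.card - (t1 - Q.card) := by
      rw [Finset.card_sdiff_of_subset hX1P, hX1]
    obtain ⟨X2, hX2sub, hX2⟩ := Finset.exists_subset_card_eq
      (show t2 - R.card ≤ (P \ X1).card by omega)
    have hX2P : X2 ⊆ P := hX2sub.trans (Finset.sdiff_subset)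
    set X3 : Finset V := (P \ X1) \ X2 with hX3def
    have hX3P : X3 ⊆ P := (Finset.sdiff_subset).trans (Finset.sdiff_subset)
    have hX3 : X3.card = t3 - W.card := by
      rw [hX3def, Finset.card_sdiff_of_subset hX2sub, hPX1, hX2]
      omega
    have dX12 : Disjoint X1 X2 := Finset.disjoint_sdiff.mono_right hX2sub
    have dX13 : Disjoint X1 X3 := Finset.disjoint_sdiff.mono_right (Finset.sdiff_subset)
    have dX23 : Disjoint X2 X3 := Finset.disjoint_sdiff
    have hXsplit : X1 ∪ (X2 ∪ X3) = P := by
      rw [hX3def, Finset.union_sdiff_of_subset hX2sub, Finset.union_sdiff_of_subset hX1P]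
    refine ⟨Q ∪ X1, R ∪ X2, W ∪ X3, ?_, ?_, ?_, ?_, ?_, ?_, ?_, ?_, ?_, ?_⟩
    · exact Finset.disjoint_union_left.mpr
        ⟨Finset.disjoint_union_right.mpr ⟨dQR, dPQ.symm.mono_right hX2P⟩,
         Finset.disjoint_union_right.mpr ⟨dPR.mono_left hX1P, dX12⟩⟩
    · exact Finset.disjoint_union_left.mpr
        ⟨Finset.disjoint_union_right.mpr ⟨dQW, dPQ.symm.mono_right hX3P⟩,
         Finset.disjoint_union_right.mpr ⟨dPW.mono_left hX1P, dX13⟩⟩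
    · exact Finset.disjoint_union_left.mpr
        ⟨Finset.disjoint_union_right.mpr ⟨dRW, dPR.symm.mono_right hX3P⟩,
         Finset.disjoint_union_right.mpr ⟨dPW.mono_left hX2P, dX23⟩⟩
    · apply Finset.eq_univ_iff_forall.mpr
      intro v
      have hv := Finset.eq_univ_iff_forall.mp hunion v
      have hvP : v ∈ P → v ∈ X1 ∨ v ∈ X2 ∨ v ∈ X3 := by
        intro h
        rw [← hXsplit] at h
        simpa [Finset.mem_union] using h
      simp only [Finset.mem_union] at hv ⊢
      tauto
    · rw [Finset.card_union_of_disjoint (dPQ.symm.mono_right hX1P),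
          Finset.card_union_of_disjoint (dPR.symm.mono_right hX2P), hX1, hX2, abs_le]
      omega
    · rw [Finset.card_union_of_disjoint (dPQ.symm.mono_right hX1P),
          Finset.card_union_of_disjoint (dPW.symm.mono_right hX3P), hX1, hX3, abs_le]
      omega
    · rw [Finset.card_union_of_disjoint (dPR.symm.mono_right hX2P),
          Finset.card_union_of_disjoint (dPW.symm.mono_right hX3P), hX2, hX3, abs_le]
      omega
    · exact hforest _ (σ 2) (σ 3) (hne 2 3 (by decide))
        (Finset.union_subset_union subset_rfl hX1P)
    · exact hforest _ (σ 1) (σ 3) (hne 1 3 (by decide))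
        (Finset.union_subset_union subset_rfl hX2P)
    · exact hforest _ (σ 0) (σ 3) (hne 0 3 (by decide))
        (Finset.union_subset_union subset_rfl hX3P)
  · -- Case II: the two large classes P, Q pair up
    push_neg at hb
    obtain ⟨Y, hYP, hYc⟩ := Finset.exists_subset_card_eq
      (show t2 - R.card ≤ P.card by omega)
    obtain ⟨Z, hZQ, hZc⟩ := Finset.exists_subset_card_eq
      (show t3 - W.card ≤ Q.card by omega)
    refine ⟨R ∪ Y, W ∪ Z, (P \ Y) ∪ (Q \ Z), ?_, ?_, ?_, ?_, ?_, ?_, ?_, ?_, ?_, ?_⟩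
    · exact Finset.disjoint_union_left.mpr
        ⟨Finset.disjoint_union_right.mpr ⟨dRW, dQR.symm.mono_right hZQ⟩,
         Finset.disjoint_union_right.mpr ⟨dPW.mono_left hYP, dPQ.mono hYP hZQ⟩⟩
    · exact Finset.disjoint_union_left.mpr
        ⟨Finset.disjoint_union_right.mpr
           ⟨dPR.symm.mono_right Finset.sdiff_subset, dQR.symm.mono_right Finset.sdiff_subset⟩,
         Finset.disjoint_union_right.mpr
           ⟨Finset.disjoint_sdiff, dPQ.mono hYP Finset.sdiff_subset⟩⟩
    · exact Finset.disjoint_union_left.mpr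
        ⟨Finset.disjoint_union_right.mpr
           ⟨dPW.symm.mono_right Finset.sdiff_subset, dQW.symm.mono_right Finset.sdiff_subset⟩,
         Finset.disjoint_union_right.mpr
           ⟨dPQ.symm.mono hZQ Finset.sdiff_subset, Finset.disjoint_sdiff⟩⟩
    · apply Finset.eq_univ_iff_forall.mpr
      intro v
      have hv := Finset.eq_univ_iff_forall.mp hunion v
      have hvP : v ∈ P → v ∈ Y ∨ v ∈ P \ Y := by
        intro h
        by_cases hy : v ∈ Y
        · exact Or.inl hy
        · exact Or.inr (Finset.mem_sdiff.mpr ⟨h, hy⟩)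
      have hvQ : v ∈ Q → v ∈ Z ∨ v ∈ Q \ Z := by
        intro h
        by_cases hz : v ∈ Z
        · exact Or.inl hz
        · exact Or.inr (Finset.mem_sdiff.mpr ⟨h, hz⟩)
      simp only [Finset.mem_union] at hv ⊢
      tauto
    · rw [Finset.card_union_of_disjoint (dPR.symm.mono_right hYP),
          Finset.card_union_of_disjoint (dQW.symm.mono_right hZQ), hYc, hZc, abs_le]
      omega
    · rw [Finset.card_union_of_disjoint (dPR.symm.mono_right hYP),
          Finset.card_union_of_disjoint (dPQ.mono Finset.sdiff_subset Finset.sdiff_subset),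
          Finset.card_sdiff_of_subset hYP, Finset.card_sdiff_of_subset hZQ, hYc, hZc, abs_le]
      omega
    · rw [Finset.card_union_of_disjoint (dQW.symm.mono_right hZQ),
          Finset.card_union_of_disjoint (dPQ.mono Finset.sdiff_subset Finset.sdiff_subset),
          Finset.card_sdiff_of_subset hYP, Finset.card_sdiff_of_subset hZQ, hYc, hZc, abs_le]
      omega
    · exact hforest _ (σ 1) (σ 3) (hne 1 3 (by decide))
        (Finset.union_subset_union subset_rfl hYP)
    · exact hforest _ (σ 0) (σ 2) (hne 0 2 (by decide))
        (Finset.union_subset_union subset_rfl hZQ)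
    · exact hforest _ (σ 3) (σ 2) (hne 3 2 (by decide))
        (Finset.union_subset_union Finset.sdiff_subset Finset.sdiff_subset)
end

section
/- If a finite simple graph G on n vertices admits a proper 4-coloring, then there exists a partition (A_1, A_2, A_3) of V(G) such that the induced subgraphs G[A_1] and G[A_2] are bipartite with |A_1| ≥ ⌊2(n+1)/5⌋ and |A_2| ≥ ⌊2(n+1)/5⌋, and A_3 is an independent set in G. (By the four color theorem this applies to every planar graph.) -/
open SimpleGraph

private lemma col2_aux {V : Type*} [DecidableEq V] (G : SimpleGraph V) (S T : Finset V)
    (hS : ∀ u ∈ S, ∀ v ∈ S, ¬ G.Adj u v) (hT : ∀ u ∈ T, ∀ v ∈ T, ¬ G.Adj u v) :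
    (G.induce ((S ∪ T : Finset V) : Set V)).Colorable 2 := by
  classical
  refine ⟨⟨fun v => if (v : V) ∈ S then 0 else 1, ?_⟩⟩
  rintro ⟨u, hu⟩ ⟨v, hv⟩ hadj
  simp only [comap_adj, Function.Embedding.coe_subtype] at hadj
  simp only [Finset.coe_union, Set.mem_union, Finset.mem_coe] at hu hv
  by_cases h1 : u ∈ S <;> by_cases h2 : v ∈ S <;> simp [h1, h2]
  · exact hS u h1 v h2 hadj
  · have hu' : u ∈ T := hu.resolve_left h1
    have hv' : v ∈ T := hv.resolve_left h2
    exact hT u hu' v hv' hadj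

theorem two_large_bipartite_parts_and_independent_set_from_proper_four_coloring
    {V : Type*} [Fintype V] [DecidableEq V] (G : SimpleGraph V)
    (n : ℕ) (hn : Fintype.card V = n)
    (hcol : G.Colorable 4) :
    ∃ A₁ A₂ A₃ : Finset V,
      Disjoint A₁ A₂ ∧ Disjoint A₁ A₃ ∧ Disjoint A₂ A₃ ∧
      A₁ ∪ A₂ ∪ A₃ = Finset.univ ∧
      (G.induce (A₁ : Set V)).Colorable 2 ∧ (G.induce (A₂ : Set V)).Colorable 2 ∧
      2 * (n + 1) / 5 ≤ A₁.card ∧ 2 * (n + 1) / 5 ≤ A₂.card ∧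
      (∀ u ∈ A₃, ∀ v ∈ A₃, ¬ G.Adj u v) := by
  classical
  obtain ⟨C⟩ := hcol
  set cls : Fin 4 → Finset V := fun i => Finset.univ.filter (fun v => C v = i) with hcls
  have hmem : ∀ v : V, v ∈ cls (C v) := fun v => by simp [hcls]
  have hindep : ∀ i, ∀ u ∈ cls i, ∀ v ∈ cls i, ¬ G.Adj u v := by
    intro i u hu v hv hadj
    simp only [hcls, Finset.mem_filter] at hu hv
    exact C.valid hadj (hu.2.trans hv.2.symm)
  have hdisj : ∀ i j : Fin 4, i ≠ j → Disjoint (cls i) (cls j) := by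
    intro i j hij
    rw [Finset.disjoint_left]
    intro a ha hb
    simp only [hcls, Finset.mem_filter] at ha hb
    exact hij (ha.2 ▸ hb.2 ▸ rfl)
  have hsum : ∑ i : Fin 4, (cls i).card = n := by
    rw [hcls, ← Finset.card_eq_sum_card_fiberwise (fun v _ => Finset.mem_univ (C v)),
      Finset.card_univ, hn]
  set σ := Tuple.sort (fun i => (cls i).card) with hσ
  set k : Fin 4 → Finset V := fun i => cls (σ i) with hk
  have hmono := Tuple.monotone_sort (fun i => (cls i).card)
  have h01 : (k 0).card ≤ (k 1).card := hmono (by decide : (0:Fin 4) ≤ 1)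
  have h12 : (k 1).card ≤ (k 2).card := hmono (by decide : (1:Fin 4) ≤ 2)
  have h23 : (k 2).card ≤ (k 3).card := hmono (by decide : (2:Fin 4) ≤ 3)
  have hksum : (k 0).card + (k 1).card + (k 2).card + (k 3).card = n := by
    have h := Equiv.sum_comp σ (fun i => (cls i).card)
    rw [hsum, Fin.sum_univ_four] at h
    exact h
  have hkdisj : ∀ i j : Fin 4, i ≠ j → Disjoint (k i) (k j) := by
    intro i j hij
    exact hdisj _ _ (fun e => hij (σ.injective e))
  have hkindep : ∀ i, ∀ u ∈ k i, ∀ v ∈ k i, ¬ G.Adj u v := fun i => hindep (σ i)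
  have hcover : ∀ v : V, v ∈ k 0 ∨ v ∈ k 1 ∨ v ∈ k 2 ∨ v ∈ k 3 := by
    intro v
    have h : v ∈ k (σ.symm (C v)) := by
      rw [hk]; simp only [Equiv.apply_symm_apply]; exact hmem v
    generalize σ.symm (C v) = j at h
    fin_cases j
    · exact Or.inl h
    · exact Or.inr (Or.inl h)
    · exact Or.inr (Or.inr (Or.inl h))
    · exact Or.inr (Or.inr (Or.inr h))
  set t := 2 * (n + 1) / 5 with ht
  by_cases hA : t ≤ (k 1).card + (k 2).card ∧ t ≤ (k 0).card + (k 3).card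
  · refine ⟨k 3 ∪ k 0, k 1 ∪ k 2, ∅, ?_, ?_, ?_, ?_, ?_, ?_, ?_, ?_, ?_⟩
    · have d31 := hkdisj 3 1 (by decide)
      have d32 := hkdisj 3 2 (by decide)
      have d01 := hkdisj 0 1 (by decide)
      have d02 := hkdisj 0 2 (by decide)
      simp only [Finset.disjoint_union_left, Finset.disjoint_union_right]
      tauto
    · simp
    · simp
    · ext v
      simp only [Finset.mem_union, Finset.mem_univ, iff_true, Finset.notMem_empty, or_false]
      rcases hcover v with h | h | h | h <;> tauto
    · exact col2_aux G _ _ (hkindep 3) (hkindep 0)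
    · exact col2_aux G _ _ (hkindep 1) (hkindep 2)
    · rw [Finset.card_union_of_disjoint (hkdisj 3 0 (by decide))]
      omega
    · rw [Finset.card_union_of_disjoint (hkdisj 1 2 (by decide))]
      omega
    · simp
  · -- split the largest class k 3
    have harith : t - (k 2).card ≤ (k 3).card ∧ t ≤ (t - (k 2).card) + (k 2).card ∧
        t ≤ ((k 3).card - (t - (k 2).card)) + (k 1).card := by
      omega
    obtain ⟨X, hXsub, hXcard⟩ := Finset.exists_subset_card_eq harith.1
    have hXindep : ∀ u ∈ X, ∀ v ∈ X, ¬ G.Adj u v :=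
      fun u hu v hv => hkindep 3 u (hXsub hu) v (hXsub hv)
    have hYindep : ∀ u ∈ k 3 \ X, ∀ v ∈ k 3 \ X, ¬ G.Adj u v :=
      fun u hu v hv => hkindep 3 u (Finset.mem_sdiff.1 hu).1 v (Finset.mem_sdiff.1 hv).1
    have dXY : Disjoint X (k 3 \ X) := Finset.disjoint_sdiff
    have dX1 : Disjoint X (k 1) := Finset.disjoint_of_subset_left hXsub (hkdisj 3 1 (by decide))
    have dX0 : Disjoint X (k 0) := Finset.disjoint_of_subset_left hXsub (hkdisj 3 0 (by decide))
    have d2Y : Disjoint (k 2) (k 3 \ X) :=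
      Finset.disjoint_of_subset_right Finset.sdiff_subset (hkdisj 2 3 (by decide))
    have d21 := hkdisj 2 1 (by decide)
    have d20 := hkdisj 2 0 (by decide)
    have dY0 : Disjoint (k 3 \ X) (k 0) :=
      Finset.disjoint_of_subset_left Finset.sdiff_subset (hkdisj 3 0 (by decide))
    have d10 := hkdisj 1 0 (by decide)
    refine ⟨X ∪ k 2, (k 3 \ X) ∪ k 1, k 0, ?_, ?_, ?_, ?_, ?_, ?_, ?_, ?_, hkindep 0⟩
    · simp only [Finset.disjoint_union_left, Finset.disjoint_union_right]
      tauto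
    · simp only [Finset.disjoint_union_left]
      tauto
    · simp only [Finset.disjoint_union_left]
      tauto
    · ext v
      simp only [Finset.mem_union, Finset.mem_sdiff, Finset.mem_univ, iff_true]
      rcases hcover v with h | h | h | h
      · tauto
      · tauto
      · tauto
      · by_cases hX : v ∈ X <;> tauto
    · exact col2_aux G _ _ hXindep (hkindep 2)
    · exact col2_aux G _ _ hYindep (hkindep 1)
    · rw [Finset.card_union_of_disjoint
        (Finset.disjoint_of_subset_left hXsub (hkdisj 3 2 (by decide))), hXcard]
      omega
    · rw [Finset.card_union_of_disjoint
        (Finset.disjoint_of_subset_left (Finset.sdiff_subset) (hkdisj 3 1 (by decide))),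
        Finset.card_sdiff_of_subset hXsub, hXcard]
      omega
end

section
/- If a finite simple graph G admits a proper 4-coloring, then G admits an equitable 3-partition (V_1, V_2, V_3) of its vertex set such that each induced subgraph G[V_i] is bipartite. (By the four color theorem, this applies to every planar graph.) -/
open SimpleGraph

lemma indep_union_colorable {V : Type*} (G : SimpleGraph V) (S : Finset V)
    (A B : Set V)
    (hA : ∀ u ∈ A, ∀ v ∈ A, ¬ G.Adj u v) (hB : ∀ u ∈ B, ∀ v ∈ B, ¬ G.Adj u v)
    (hS : (S : Set V) ⊆ A ∪ B) : (G.induce (S : Set V)).Colorable 2 := by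
  classical
  refine ⟨Coloring.mk (fun v => if (v : V) ∈ A then 0 else 1) ?_⟩
  rintro ⟨u, hu⟩ ⟨v, hv⟩ hadj
  simp only [comap_adj, Function.Embedding.coe_subtype] at hadj
  by_cases huA : u ∈ A <;> by_cases hvA : v ∈ A
  · exact absurd hadj (hA u huA v hvA)
  · simp [huA, hvA]
  · simp [huA, hvA]
  · have huB : u ∈ B := (hS hu).resolve_left huA
    have hvB : v ∈ B := (hS hv).resolve_left hvA
    exact absurd hadj (hB u huB v hvB)

set_option maxHeartbeats 1600000 in
lemma core_partition {V : Type*} [DecidableEq V] (A B C D : Finset V)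
    (hAB : Disjoint A B) (hAC : Disjoint A C) (hAD : Disjoint A D)
    (hBC : Disjoint B C) (hBD : Disjoint B D) (hCD : Disjoint C D)
    (hba : B.card ≤ A.card) (hcb : C.card ≤ B.card) (hdc : D.card ≤ C.card) :
    ∃ V₁ V₂ V₃ : Finset V,
      Disjoint V₁ V₂ ∧ Disjoint V₁ V₃ ∧ Disjoint V₂ V₃ ∧
      V₁ ∪ V₂ ∪ V₃ = A ∪ B ∪ C ∪ D ∧
      V₁.card = (A.card + B.card + C.card + D.card + 2) / 3 ∧
      V₂.card = (A.card + B.card + C.card + D.card + 1) / 3 ∧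
      V₃.card = (A.card + B.card + C.card + D.card) / 3 ∧
      (∀ i : Fin 3, ∃ X Y : Finset V,
        (X = A ∨ X = B ∨ X = C ∨ X = D) ∧ (Y = A ∨ Y = B ∨ Y = C ∨ Y = D) ∧
        (![V₁, V₂, V₃] i) ⊆ X ∪ Y) := by
  set a := A.card with ha
  set b := B.card with hb
  set c := C.card with hc
  set d := D.card with hd
  set n := a + b + c + d with hn
  by_cases hcase : (n + 1) / 3 ≤ b + d
  · -- C2 : V₁ = A' ∪ C, V₂ = B' ∪ D, V₃ = (A \ A') ∪ (B \ B')
    obtain ⟨A', hA's, hA'c⟩ := Finset.exists_subset_card_eq (s := A) (n := (n + 2) / 3 - c) (by omega)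
    obtain ⟨B', hB's, hB'c⟩ := Finset.exists_subset_card_eq (s := B) (n := (n + 1) / 3 - d) (by omega)
    refine ⟨A' ∪ C, B' ∪ D, (A \ A') ∪ (B \ B'), ?_, ?_, ?_, ?_, ?_, ?_, ?_, ?_⟩
    · rw [Finset.disjoint_left]
      intro x hx hy
      simp only [Finset.mem_union, Finset.mem_sdiff] at hx hy
      have g1 : x ∈ A' → x ∈ A := fun h => hA's h
      have g2 : x ∈ B' → x ∈ B := fun h => hB's h
      have e1 : x ∈ A → x ∈ B → False := fun h h' => Finset.disjoint_left.1 hAB h h'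
      have e2 : x ∈ A → x ∈ C → False := fun h h' => Finset.disjoint_left.1 hAC h h'
      have e3 : x ∈ A → x ∈ D → False := fun h h' => Finset.disjoint_left.1 hAD h h'
      have e4 : x ∈ B → x ∈ C → False := fun h h' => Finset.disjoint_left.1 hBC h h'
      have e5 : x ∈ B → x ∈ D → False := fun h h' => Finset.disjoint_left.1 hBD h h'
      have e6 : x ∈ C → x ∈ D → False := fun h h' => Finset.disjoint_left.1 hCD h h'
      rcases hx with h | h <;> rcases hy with h' | h'
      exacts [e1 (g1 h) (g2 h'), e3 (g1 h) h', e4 (g2 h') h, e6 h h']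
    · rw [Finset.disjoint_left]
      intro x hx hy
      simp only [Finset.mem_union, Finset.mem_sdiff] at hx hy
      have g1 : x ∈ A' → x ∈ A := fun h => hA's h
      have g2 : x ∈ B' → x ∈ B := fun h => hB's h
      have e1 : x ∈ A → x ∈ B → False := fun h h' => Finset.disjoint_left.1 hAB h h'
      have e2 : x ∈ A → x ∈ C → False := fun h h' => Finset.disjoint_left.1 hAC h h'
      have e3 : x ∈ A → x ∈ D → False := fun h h' => Finset.disjoint_left.1 hAD h h'
      have e4 : x ∈ B → x ∈ C → False := fun h h' => Finset.disjoint_left.1 hBC h h'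
      have e5 : x ∈ B → x ∈ D → False := fun h h' => Finset.disjoint_left.1 hBD h h'
      have e6 : x ∈ C → x ∈ D → False := fun h h' => Finset.disjoint_left.1 hCD h h'
      rcases hx with h | h <;> rcases hy with h' | h'
      exacts [h'.2 h, e1 (g1 h) h'.1, e2 h'.1 h, e4 h'.1 h]
    · rw [Finset.disjoint_left]
      intro x hx hy
      simp only [Finset.mem_union, Finset.mem_sdiff] at hx hy
      have g1 : x ∈ A' → x ∈ A := fun h => hA's h
      have g2 : x ∈ B' → x ∈ B := fun h => hB's h
      have e1 : x ∈ A → x ∈ B → False := fun h h' => Finset.disjoint_left.1 hAB h h'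
      have e2 : x ∈ A → x ∈ C → False := fun h h' => Finset.disjoint_left.1 hAC h h'
      have e3 : x ∈ A → x ∈ D → False := fun h h' => Finset.disjoint_left.1 hAD h h'
      have e4 : x ∈ B → x ∈ C → False := fun h h' => Finset.disjoint_left.1 hBC h h'
      have e5 : x ∈ B → x ∈ D → False := fun h h' => Finset.disjoint_left.1 hBD h h'
      have e6 : x ∈ C → x ∈ D → False := fun h h' => Finset.disjoint_left.1 hCD h h'
      rcases hx with h | h <;> rcases hy with h' | h'
      exacts [e1 h'.1 (g2 h), h'.2 h, e3 h'.1 h, e5 h'.1 h]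
    · ext x
      have h1 : x ∈ A' → x ∈ A := fun h => hA's h
      have h2 : x ∈ B' → x ∈ B := fun h => hB's h
      simp only [Finset.mem_union, Finset.mem_sdiff]
      by_cases hxA : x ∈ A' <;> by_cases hxB : x ∈ B' <;> tauto
    · rw [Finset.card_union_of_disjoint (hAC.mono hA's le_rfl), hA'c]
      omega
    · rw [Finset.card_union_of_disjoint (hBD.mono hB's le_rfl), hB'c]
      omega
    · rw [Finset.card_union_of_disjoint (hAB.mono Finset.sdiff_subset Finset.sdiff_subset),
        Finset.card_sdiff_of_subset hA's, Finset.card_sdiff_of_subset hB's, hA'c, hB'c]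
      omega
    · intro i
      fin_cases i
      · exact ⟨A, C, Or.inl rfl, Or.inr (Or.inr (Or.inl rfl)),
          Finset.union_subset_union hA's le_rfl⟩
      · exact ⟨B, D, Or.inr (Or.inl rfl), Or.inr (Or.inr (Or.inr rfl)),
          Finset.union_subset_union hB's le_rfl⟩
      · exact ⟨A, B, Or.inl rfl, Or.inr (Or.inl rfl),
          Finset.union_subset_union Finset.sdiff_subset Finset.sdiff_subset⟩
  · -- C1 : V₁ = A₁ ∪ B, V₂ = A₂ ∪ C, V₃ = (A \ (A₁ ∪ A₂)) ∪ D
    obtain ⟨A₁, hA₁s, hA₁c⟩ := Finset.exists_subset_card_eq (s := A) (n := (n + 2) / 3 - b) (by omega)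
    have hsd : (A \ A₁).card = a - ((n + 2) / 3 - b) := by
      rw [Finset.card_sdiff_of_subset hA₁s, hA₁c]
    obtain ⟨A₂, hA₂s, hA₂c⟩ := Finset.exists_subset_card_eq (s := A \ A₁) (n := (n + 1) / 3 - c)
      (by omega)
    have hA₂A : A₂ ⊆ A := hA₂s.trans Finset.sdiff_subset
    have h12 : Disjoint A₁ A₂ := (Finset.disjoint_sdiff).mono le_rfl hA₂s
    have hu12 : A₁ ∪ A₂ ⊆ A := Finset.union_subset hA₁s hA₂A
    have hcard12 : (A₁ ∪ A₂).card = ((n + 2) / 3 - b) + ((n + 1) / 3 - c) := by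
      rw [Finset.card_union_of_disjoint h12, hA₁c, hA₂c]
    have h12' : ∀ x, x ∈ A₁ → x ∈ A₂ → False := fun x h h' =>
      Finset.disjoint_left.1 h12 h h'
    refine ⟨A₁ ∪ B, A₂ ∪ C, (A \ (A₁ ∪ A₂)) ∪ D, ?_, ?_, ?_, ?_, ?_, ?_, ?_, ?_⟩
    · rw [Finset.disjoint_left]
      intro x hx hy
      simp only [Finset.mem_union, Finset.mem_sdiff, not_or] at hx hy
      have g1 : x ∈ A₁ → x ∈ A := fun h => hA₁s h
      have g2 : x ∈ A₂ → x ∈ A := fun h => hA₂A h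
      have g3 := h12' x
      have e1 : x ∈ A → x ∈ B → False := fun h h' => Finset.disjoint_left.1 hAB h h'
      have e2 : x ∈ A → x ∈ C → False := fun h h' => Finset.disjoint_left.1 hAC h h'
      have e3 : x ∈ A → x ∈ D → False := fun h h' => Finset.disjoint_left.1 hAD h h'
      have e4 : x ∈ B → x ∈ C → False := fun h h' => Finset.disjoint_left.1 hBC h h'
      have e5 : x ∈ B → x ∈ D → False := fun h h' => Finset.disjoint_left.1 hBD h h'
      have e6 : x ∈ C → x ∈ D → False := fun h h' => Finset.disjoint_left.1 hCD h h'
      rcases hx with h | h <;> rcases hy with h' | h'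
      exacts [g3 h h', e2 (g1 h) h', e1 (g2 h') h, e4 h h']
    · rw [Finset.disjoint_left]
      intro x hx hy
      simp only [Finset.mem_union, Finset.mem_sdiff, not_or] at hx hy
      have g1 : x ∈ A₁ → x ∈ A := fun h => hA₁s h
      have g2 : x ∈ A₂ → x ∈ A := fun h => hA₂A h
      have g3 := h12' x
      have e1 : x ∈ A → x ∈ B → False := fun h h' => Finset.disjoint_left.1 hAB h h'
      have e2 : x ∈ A → x ∈ C → False := fun h h' => Finset.disjoint_left.1 hAC h h'
      have e3 : x ∈ A → x ∈ D → False := fun h h' => Finset.disjoint_left.1 hAD h h'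
      have e4 : x ∈ B → x ∈ C → False := fun h h' => Finset.disjoint_left.1 hBC h h'
      have e5 : x ∈ B → x ∈ D → False := fun h h' => Finset.disjoint_left.1 hBD h h'
      have e6 : x ∈ C → x ∈ D → False := fun h h' => Finset.disjoint_left.1 hCD h h'
      rcases hx with h | h <;> rcases hy with h' | h'
      exacts [h'.2.1 h, e3 (g1 h) h', e1 h'.1 h, e5 h h']
    · rw [Finset.disjoint_left]
      intro x hx hy
      simp only [Finset.mem_union, Finset.mem_sdiff, not_or] at hx hy
      have g1 : x ∈ A₁ → x ∈ A := fun h => hA₁s h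
      have g2 : x ∈ A₂ → x ∈ A := fun h => hA₂A h
      have g3 := h12' x
      have e1 : x ∈ A → x ∈ B → False := fun h h' => Finset.disjoint_left.1 hAB h h'
      have e2 : x ∈ A → x ∈ C → False := fun h h' => Finset.disjoint_left.1 hAC h h'
      have e3 : x ∈ A → x ∈ D → False := fun h h' => Finset.disjoint_left.1 hAD h h'
      have e4 : x ∈ B → x ∈ C → False := fun h h' => Finset.disjoint_left.1 hBC h h'
      have e5 : x ∈ B → x ∈ D → False := fun h h' => Finset.disjoint_left.1 hBD h h'
      have e6 : x ∈ C → x ∈ D → False := fun h h' => Finset.disjoint_left.1 hCD h h'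
      rcases hx with h | h <;> rcases hy with h' | h'
      exacts [h'.2.2 h, e3 (g2 h) h', e2 h'.1 h, e6 h h']
    · ext x
      have h1 : x ∈ A₁ → x ∈ A := fun h => hA₁s h
      have h2 : x ∈ A₂ → x ∈ A := fun h => hA₂A h
      simp only [Finset.mem_union, Finset.mem_sdiff, not_or]
      by_cases hx1 : x ∈ A₁ <;> by_cases hx2 : x ∈ A₂ <;> tauto
    · rw [Finset.card_union_of_disjoint (hAB.mono hA₁s le_rfl), hA₁c]
      omega
    · rw [Finset.card_union_of_disjoint (hAC.mono hA₂A le_rfl), hA₂c]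
      omega
    · rw [Finset.card_union_of_disjoint (hAD.mono Finset.sdiff_subset le_rfl),
        Finset.card_sdiff_of_subset hu12, hcard12]
      omega
    · intro i
      fin_cases i
      · exact ⟨A, B, Or.inl rfl, Or.inr (Or.inl rfl),
          Finset.union_subset_union hA₁s le_rfl⟩
      · exact ⟨A, C, Or.inl rfl, Or.inr (Or.inr (Or.inl rfl)),
          Finset.union_subset_union hA₂A le_rfl⟩
      · exact ⟨A, D, Or.inl rfl, Or.inr (Or.inr (Or.inr rfl)),
          Finset.union_subset_union Finset.sdiff_subset le_rfl⟩

theorem equitable_three_partition_into_bipartite_of_four_colorable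
    {V : Type*} [Fintype V] [DecidableEq V] (G : SimpleGraph V)
    (hcol : G.Colorable 4) :
    ∃ V₁ V₂ V₃ : Finset V,
      Disjoint V₁ V₂ ∧ Disjoint V₁ V₃ ∧ Disjoint V₂ V₃ ∧
      V₁ ∪ V₂ ∪ V₃ = Finset.univ ∧
      |(V₁.card : ℤ) - (V₂.card : ℤ)| ≤ 1 ∧
      |(V₁.card : ℤ) - (V₃.card : ℤ)| ≤ 1 ∧
      |(V₂.card : ℤ) - (V₃.card : ℤ)| ≤ 1 ∧
      (G.induce (V₁ : Set V)).Colorable 2 ∧ (G.induce (V₂ : Set V)).Colorable 2 ∧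
      (G.induce (V₃ : Set V)).Colorable 2 := by
  classical
  obtain ⟨φ⟩ := hcol
  set g : Fin 4 → Finset V := fun i => Finset.univ.filter (fun v => φ v = i) with hg
  have hmemg : ∀ (v : V) (i : Fin 4), v ∈ g i ↔ φ v = i := by
    intro v i; simp [hg]
  have hgdisj : ∀ i j : Fin 4, i ≠ j → Disjoint (g i) (g j) := by
    intro i j hij
    rw [Finset.disjoint_left]
    intro x hx hx'
    rw [hmemg] at hx hx'
    exact hij (hx ▸ hx')
  have hgindep : ∀ (i : Fin 4), ∀ u ∈ (g i : Set V), ∀ v ∈ (g i : Set V), ¬ G.Adj u v := by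
    intro i u hu v hv hadj
    rw [Finset.mem_coe, hmemg] at hu hv
    exact φ.valid hadj (hu.trans hv.symm)
  set σ := Tuple.sort (fun i => (g i).card) with hσ
  have hmono := Tuple.monotone_sort (fun i => (g i).card)
  set A := g (σ 3) with hA
  set B := g (σ 2) with hB
  set C := g (σ 1) with hC
  set D := g (σ 0) with hD
  have hba : B.card ≤ A.card := hmono (by decide : (2 : Fin 4) ≤ 3)
  have hcb : C.card ≤ B.card := hmono (by decide : (1 : Fin 4) ≤ 2)
  have hdc : D.card ≤ C.card := hmono (by decide : (0 : Fin 4) ≤ 1)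
  have hdisj : ∀ i j : Fin 4, i ≠ j → Disjoint (g (σ i)) (g (σ j)) := by
    intro i j hij
    exact hgdisj _ _ (fun h => hij (σ.injective h))
  obtain ⟨V₁, V₂, V₃, h12, h13, h23, hunion, hc1, hc2, hc3, htwo⟩ :=
    core_partition A B C D
      (hdisj 3 2 (by decide)) (hdisj 3 1 (by decide)) (hdisj 3 0 (by decide))
      (hdisj 2 1 (by decide)) (hdisj 2 0 (by decide)) (hdisj 1 0 (by decide))
      hba hcb hdc
  have huniv : A ∪ B ∪ C ∪ D = Finset.univ := by
    rw [Finset.eq_univ_iff_forall]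
    intro v
    obtain ⟨i, hi⟩ := σ.surjective (φ v)
    have hv : v ∈ g (σ i) := by rw [hmemg, hi]
    fin_cases i <;> simp_all [Finset.mem_union]
  have hcolor : ∀ S : Finset V,
      (∃ X Y : Finset V,
        (X = A ∨ X = B ∨ X = C ∨ X = D) ∧ (Y = A ∨ Y = B ∨ Y = C ∨ Y = D) ∧
        S ⊆ X ∪ Y) → (G.induce (S : Set V)).Colorable 2 := by
    rintro S ⟨X, Y, hX, hY, hsub⟩
    have hXi : ∀ u ∈ (X : Set V), ∀ v ∈ (X : Set V), ¬ G.Adj u v := by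
      rcases hX with rfl | rfl | rfl | rfl <;> exact hgindep _
    have hYi : ∀ u ∈ (Y : Set V), ∀ v ∈ (Y : Set V), ¬ G.Adj u v := by
      rcases hY with rfl | rfl | rfl | rfl <;> exact hgindep _
    refine indep_union_colorable G S X Y hXi hYi ?_
    intro x hx
    have := hsub hx
    rw [Finset.mem_union] at this
    exact this.imp (fun h => h) (fun h => h)
  refine ⟨V₁, V₂, V₃, h12, h13, h23, hunion.trans huniv, ?_, ?_, ?_,
    hcolor V₁ (htwo 0), hcolor V₂ (htwo 1), hcolor V₃ (htwo 2)⟩ <;>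
  · rw [abs_le]
    omega
end

section
/- Let c ≥ 2 be an integer. If the vertex set of a finite simple graph G can be partitioned into c independent sets A_1,…,A_c such that for all i ≠ j the induced subgraph G[A_i ∪ A_j] is a linear forest, then G admits an equitable (c−1)-partition (V_1,…,V_{c−1}) of its vertex set such that each induced subgraph G[V_i] is a linear forest. (By a theorem of Cai, Xie, and Yang, every planar graph G admits such a coloring with c = Δ(G)+7 colors, so every planar graph admits an equitable (Δ(G)+6)-partition into linear forests.) -/
open SimpleGraph

/-- The set `S` induces a linear forest in `G`: `G[S]` is acyclic and every vertex of `S`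
has at most two neighbors inside `S`. -/
def IsLinearForestOn {V : Type*} (G : SimpleGraph V) (S : Set V) : Prop :=
  (G.induce S).IsAcyclic ∧ ∀ v ∈ S, (G.neighborSet v ∩ S).ncard ≤ 2

/-!
Colour every vertex by one class `A i` containing it and fix target sizes `d` for the `c - 1`
parts, pairwise within one of each other and summing to `|V|`. Take the largest target `d j`,
the smallest colour class `A m` and the largest remaining class `A M`: counting shows
`|A m| ≤ d j ≤ |A m| + |A M|`, so `A m` together with part of `A M` is a part of size `d j`
meeting only two colours. Removing it leaves one colour and one target fewer, and we recurse.
Each part lies in some `A a ∪ A b` with `a ≠ b`, hence induces a linear forest.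
-/

open Finset

lemma IsLinearForestOn.mono {V : Type*} [Finite V] {G : SimpleGraph V} {S T : Set V}
    (h : IsLinearForestOn G S) (hTS : T ⊆ S) : IsLinearForestOn G T := by
  refine ⟨fun v p hp => ?_, fun v hv => ?_⟩
  · exact h.1 _ (hp.map (f := (induceHomOfLE G hTS).toHom) (induceHomOfLE G hTS).injective)
  · exact (Set.ncard_le_ncard (Set.inter_subset_inter_right _ hTS)).trans (h.2 v (hTS hv))

theorem exists_le_add_one_sum_eq (ι : Type*) [Fintype ι] [DecidableEq ι] [Nonempty ι]
    (n : ℕ) :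
    ∃ d : ι → ℕ, (∀ i j, d i ≤ d j + 1) ∧ ∑ i, d i = n := by
  induction n with
  | zero => exact ⟨0, by simp, by simp⟩
  | succ n ih =>
    obtain ⟨d, hd, hsum⟩ := ih
    obtain ⟨i₀, -, hmin⟩ := univ.exists_min_image d univ_nonempty
    refine ⟨d + Pi.single i₀ 1, fun i j => ?_, by simp [sum_add_distrib, hsum]⟩
    have := hd i i₀; have := hd i j; have := hmin i (mem_univ _); have := hmin j (mem_univ _)
    simp only [Pi.add_apply, Pi.single_apply]
    split_ifs <;> subst_vars <;> omega

/-- `n` is a sum of `K + 1` terms with least term `a` and the others at most `b`, and also a sum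
of `K` terms with largest term `D` and the others at least `D - 1`. -/
theorem le_and_le_add_of_sum_bounds {K a b D n : ℕ} (hK : 0 < K) (hmin : (K + 1) * a ≤ n)
    (hmax : n ≤ a + K * b) (hD : n ≤ K * D) (hD' : (K - 1) * (D - 1) + D ≤ n) :
    a ≤ D ∧ D ≤ a + b := by
  obtain ⟨K, rfl⟩ : ∃ K', K = K' + 1 := ⟨K - 1, by omega⟩
  constructor
  · by_contra! h
    nlinarith
  · by_contra! h
    obtain ⟨e, rfl⟩ : ∃ e, D = e + 1 := ⟨D - 1, by omega⟩
    simp only [Nat.add_sub_cancel] at hD'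
    nlinarith

section TwoColoredParts

variable {α ι κ : Type*} [DecidableEq α] [DecidableEq ι] [DecidableEq κ]
  (f : α → ι) (d : κ → ℕ)

theorem exists_twoColored_part (U : Finset α) (s : Finset ι) (t : Finset κ)
    (hst : #s = #t + 1) (ht : t.Nonempty) (hU : ∀ x ∈ U, f x ∈ s)
    (hd : ∀ i ∈ t, ∀ j ∈ t, d i ≤ d j + 1) (hsum : ∑ j ∈ t, d j = #U) :
    ∃ j ∈ t, ∃ m ∈ s, ∃ M ∈ s, m ≠ M ∧ ∃ T ⊆ U, #T = d j ∧
      {x ∈ U | f x = m} ⊆ T ∧ ∀ x ∈ T, f x = m ∨ f x = M := by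
  obtain ⟨j, hj, hjmax⟩ := t.exists_max_image d ht
  obtain ⟨m, hm, hmmin⟩ :=
    s.exists_min_image (fun i => #{x ∈ U | f x = i}) (card_pos.1 (by omega))
  obtain ⟨M, hM, hMmax⟩ :=
    (s.erase m).exists_max_image (fun i => #{x ∈ U | f x = i}) (card_pos.1 (by simp [*]))
  have hmM : m ≠ M := (ne_of_mem_erase hM).symm
  have hUw : #U = ∑ i ∈ s, #{x ∈ U | f x = i} := card_eq_sum_card_fiberwise hU
  obtain ⟨hlow, hhigh⟩ : #{x ∈ U | f x = m} ≤ d j ∧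
      d j ≤ #{x ∈ U | f x = m} + #{x ∈ U | f x = M} := by
    refine le_and_le_add_of_sum_bounds (K := #t) (n := #U) (card_pos.2 ht) ?_ ?_ ?_ ?_
    · simpa [hst, hUw] using card_nsmul_le_sum s _ _ hmmin
    · have := sum_le_card_nsmul (s.erase m) _ _ hMmax
      rw [card_erase_of_mem hm, hst, smul_eq_mul, Nat.add_sub_cancel] at this
      rw [hUw, ← add_sum_erase s _ hm]
      exact Nat.add_le_add_left this _
    · simpa [hsum] using sum_le_card_nsmul t d (d j) hjmax
    · have := card_nsmul_le_sum (t.erase j) d (d j - 1) fun i hi => by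
        have := hd j hj i (mem_of_mem_erase hi); omega
      rw [card_erase_of_mem hj, smul_eq_mul] at this
      rw [← hsum, ← add_sum_erase t d hj, add_comm]
      exact Nat.add_le_add_left this _
  obtain ⟨B, hBM, hB⟩ :=
    exists_subset_card_eq (s := {x ∈ U | f x = M}) (n := d j - #{x ∈ U | f x = m}) (by omega)
  refine ⟨j, hj, m, hm, M, mem_of_mem_erase hM, hmM, {x ∈ U | f x = m} ∪ B, ?_, ?_,
    subset_union_left, ?_⟩
  · exact union_subset (filter_subset _ _) (hBM.trans (filter_subset _ _))
  · rw [card_union_of_disjoint, hB]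
    · omega
    · refine disjoint_left.2 fun x hxm hxB => hmM ?_
      exact (mem_filter.1 hxm).2.symm.trans (mem_filter.1 (hBM hxB)).2
  · intro x hx
    rcases mem_union.1 hx with h | h
    · exact Or.inl (mem_filter.1 h).2
    · exact Or.inr (mem_filter.1 (hBM h)).2

theorem exists_twoColored_partition (U : Finset α) (s : Finset ι) (t : Finset κ)
    (hst : #s = #t + 1) (hU : ∀ x ∈ U, f x ∈ s)
    (hd : ∀ i ∈ t, ∀ j ∈ t, d i ≤ d j + 1) (hsum : ∑ j ∈ t, d j = #U) :
    ∃ P : κ → Finset α, (t : Set κ).PairwiseDisjoint P ∧ t.biUnion P = U ∧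
      (∀ j ∈ t, #(P j) = d j) ∧
      ∀ j ∈ t, ∃ a ∈ s, ∃ b ∈ s, a ≠ b ∧ ∀ x ∈ P j, f x = a ∨ f x = b := by
  induction t using Finset.strongInduction generalizing U s with
  | H t ih =>
    rcases t.eq_empty_or_nonempty with rfl | ht
    · exact ⟨fun _ => ∅, by simp, by simpa [eq_comm] using hsum, by simp, by simp⟩
    obtain ⟨j, hj, m, hm, M, hM, hmM, T, hTU, hT, hmT, hTf⟩ :=
      exists_twoColored_part f d U s t hst ht hU hd hsum
    have hU' : ∀ x ∈ U \ T, f x ∈ s.erase m := fun x hx =>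
      mem_erase.2 ⟨fun h => (mem_sdiff.1 hx).2 (hmT (mem_filter.2 ⟨(mem_sdiff.1 hx).1, h⟩)),
        hU x (mem_sdiff.1 hx).1⟩
    obtain ⟨P, hPdisj, hPU, hPcard, hPf⟩ :=
      ih (t.erase j) (erase_ssubset hj) (U \ T) (s.erase m)
        (by rw [card_erase_of_mem hm, card_erase_of_mem hj, hst]; have := ht.card_pos; omega)
        hU' (fun i hi i' hi' => hd i (mem_of_mem_erase hi) i' (mem_of_mem_erase hi'))
        (by rw [card_sdiff_of_subset hTU, ← hsum, ← add_sum_erase t d hj, hT]; omega)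
    have hPT : ∀ i ∈ t.erase j, Disjoint T (P i) := fun i hi =>
      disjoint_sdiff.mono_right (hPU ▸ subset_biUnion_of_mem P hi)
    refine ⟨Function.update P j T, ?_, ?_, ?_, ?_⟩
    · rw [← insert_erase hj, coe_insert, Set.pairwiseDisjoint_insert]
      refine ⟨fun i hi i' hi' hii' => ?_, fun i hi _ => ?_⟩
      · simpa [Function.onFun, ne_of_mem_erase (mem_coe.1 hi), ne_of_mem_erase (mem_coe.1 hi')]
          using hPdisj hi hi' hii'
      · simpa [ne_of_mem_erase hi] using hPT i (mem_coe.1 hi)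
    · rw [← insert_erase hj, biUnion_insert, Function.update_self,
        biUnion_congr rfl fun i hi => Function.update_of_ne (ne_of_mem_erase hi) _ _, hPU,
        union_sdiff_of_subset hTU]
    · intro i hi
      rcases eq_or_ne i j with rfl | hij
      · simp [hT]
      · simp [hij, hPcard i (mem_erase.2 ⟨hij, hi⟩)]
    · intro i hi
      rcases eq_or_ne i j with rfl | hij
      · exact ⟨m, hm, M, hM, hmM, by simpa using hTf⟩
      · obtain ⟨a, ha, b, hb, hab, hPi⟩ := hPf i (mem_erase.2 ⟨hij, hi⟩)
        exact ⟨a, mem_of_mem_erase ha, b, mem_of_mem_erase hb, hab, by simpa [hij] using hPi⟩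

end TwoColoredParts

theorem equitable_partition_into_linear_forests
    {V : Type*} [Fintype V] [DecidableEq V] (G : SimpleGraph V)
    (c : ℕ) (hc : 2 ≤ c)
    (hcol : ∃ A : Fin c → Set V,
      (∀ i j, i ≠ j → Disjoint (A i) (A j)) ∧
      (⋃ i, A i) = Set.univ ∧
      (∀ i, ∀ u ∈ A i, ∀ v ∈ A i, ¬ G.Adj u v) ∧
      (∀ i j, i ≠ j → IsLinearForestOn G (A i ∪ A j))) :
    ∃ P : Fin (c - 1) → Finset V,
      (∀ i j, i ≠ j → Disjoint (P i) (P j)) ∧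
      Finset.univ.biUnion P = Finset.univ ∧
      (∀ i j, |((P i).card : ℤ) - ((P j).card : ℤ)| ≤ 1) ∧
      (∀ i, IsLinearForestOn G (P i : Set V)) := by
  obtain ⟨A, -, hcover, -, hLF⟩ := hcol
  have : Nonempty (Fin (c - 1)) := ⟨⟨0, by omega⟩⟩
  choose color hcolor using fun v => Set.mem_iUnion.1 (hcover ▸ Set.mem_univ v : v ∈ ⋃ i, A i)
  obtain ⟨d, hd, hdsum⟩ := exists_le_add_one_sum_eq (Fin (c - 1)) (Fintype.card V)
  obtain ⟨P, hPdisj, hPU, hPcard, hPcolor⟩ :=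
    exists_twoColored_partition color d univ univ univ (by simp; omega) (by simp)
      (fun i _ j _ => hd i j) hdsum
  refine ⟨P, fun i j hij => hPdisj (mem_univ i) (mem_univ j) hij, hPU, fun i j => ?_,
    fun i => ?_⟩
  · rw [hPcard i (mem_univ i), hPcard j (mem_univ j), abs_sub_le_iff]
    have := hd i j; have := hd j i
    omega
  · obtain ⟨a, -, b, -, hab, hPi⟩ := hPcolor i (mem_univ i)
    refine (hLF a b hab).mono fun x hx => ?_
    rcases hPi x hx with h | h <;> rw [← h]
    exacts [Or.inl (hcolor x), Or.inr (hcolor x)]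
end
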